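/- arXiv:1404.2795 — 9 statements merged into one kernel-verified Lean document; each statement's English description precedes it below -/
import Mathlib

section
/- Let F and Π be n×m real matrices with 1 - ΠᵀF invertible. Then the product of block matrices [[1, 0],[Πᵀ, 1]] · [[1, -F],[0, 1]] factorizes as [[1, -F'],[0, 1]] · [[M, 0],[0, N]] · [[1, 0],[Π'ᵀ, 1]], where F' = F(1 - ΠᵀF)⁻¹, Π' = Π(1 - FᵀΠ)⁻¹, M = (1 - FΠᵀ)⁻¹, and N = 1 - ΠᵀF. -/
open Matrix

/-- Factorization underlying the gauged open-closed membrane relations: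
`[[1,0],[Πᵀ,1]] · [[1,-F],[0,1]] = [[1,-F'],[0,1]] · [[M,0],[0,N]] · [[1,0],[Π'ᵀ,1]]`
with `F' = F(1-ΠᵀF)⁻¹`, `Π' = Π(1-FᵀΠ)⁻¹`, `M = (1-FΠᵀ)⁻¹`, `N = 1-ΠᵀF`. -/
theorem gauged_open_closed_factorization {n m : ℕ} (F Pi : Matrix (Fin n) (Fin m) ℝ)
    (h : IsUnit (1 - Piᵀ * F)) :
    fromBlocks 1 0 Piᵀ 1 * fromBlocks 1 (-F) 0 1 =
      fromBlocks 1 (-(F * (1 - Piᵀ * F)⁻¹)) 0 1 *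
        fromBlocks (1 - F * Piᵀ)⁻¹ 0 0 (1 - Piᵀ * F) *
        fromBlocks 1 0 (Pi * (1 - Fᵀ * Pi)⁻¹)ᵀ 1 := by
  have hA : IsUnit (1 - Piᵀ * F).det := (isUnit_iff_isUnit_det _).mp h
  have hAinv : (1 - Piᵀ * F) * (1 - Piᵀ * F)⁻¹ = 1 := mul_nonsing_inv _ hA
  have hinvA : (1 - Piᵀ * F)⁻¹ * (1 - Piᵀ * F) = 1 := nonsing_inv_mul _ hA
  have hCt : (Pi * (1 - Fᵀ * Pi)⁻¹)ᵀ = (1 - Piᵀ * F)⁻¹ * Piᵀ := by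
    rw [transpose_mul, transpose_nonsing_inv]
    congr 1
    simp [transpose_sub, transpose_mul]
  have e : (1 - F * Piᵀ) * (F * (1 - Piᵀ * F)⁻¹ * Piᵀ) = F * Piᵀ := by
    calc (1 - F * Piᵀ) * (F * (1 - Piᵀ * F)⁻¹ * Piᵀ)
        = F * ((1 - Piᵀ * F) * (1 - Piᵀ * F)⁻¹) * Piᵀ := by
          simp only [Matrix.sub_mul, Matrix.mul_sub, Matrix.one_mul, Matrix.mul_one,
            Matrix.mul_assoc]
      _ = F * Piᵀ := by rw [hAinv, Matrix.mul_one]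
  have hB1 : (1 - F * Piᵀ) * (1 + F * (1 - Piᵀ * F)⁻¹ * Piᵀ) = 1 := by
    rw [Matrix.mul_add, Matrix.mul_one, e]
    abel
  have hBinv : (1 - F * Piᵀ)⁻¹ = 1 + F * (1 - Piᵀ * F)⁻¹ * Piᵀ := inv_eq_right_inv hB1
  rw [hCt, hBinv, fromBlocks_multiply, fromBlocks_multiply, fromBlocks_multiply,
    fromBlocks_inj]
  have e1 : F * (1 - Piᵀ * F)⁻¹ * (1 - Piᵀ * F) = F := by
    rw [Matrix.mul_assoc, hinvA, Matrix.mul_one]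
  have e2 : (1 - Piᵀ * F) * ((1 - Piᵀ * F)⁻¹ * Piᵀ) = Piᵀ := by
    rw [← Matrix.mul_assoc, hAinv, Matrix.one_mul]
  refine ⟨?_, ?_, ?_, ?_⟩
  · simp only [Matrix.mul_one, Matrix.one_mul, Matrix.mul_zero, Matrix.zero_mul,
      add_zero, zero_add, Matrix.neg_mul, Matrix.mul_neg]
    rw [e1, Matrix.mul_assoc F, ← Matrix.mul_assoc F (1 - Piᵀ * F)⁻¹ Piᵀ]
    abel
  · simp only [Matrix.mul_one, Matrix.one_mul, Matrix.mul_zero, Matrix.zero_mul,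
      add_zero, zero_add, Matrix.neg_mul, Matrix.mul_neg, e1]
  · simp only [Matrix.mul_one, Matrix.one_mul, Matrix.mul_zero, Matrix.zero_mul,
      add_zero, zero_add, e2]
  · simp only [Matrix.mul_one, Matrix.one_mul, Matrix.mul_zero, Matrix.zero_mul,
      add_zero, zero_add, Matrix.neg_mul, Matrix.mul_neg]
    abel
end

section
/- Let g, g̃ be positive definite matrices of sizes n×n and m×m respectively, C and F n×m matrices, Π an n×m matrix with 1 - ΠᵀF invertible, and suppose also the open variables G, G̃, Φ (with G, G̃ positive definite) satisfy the open-closed relations [[g, C],[-Cᵀ, g̃]]⁻¹ = [[G, Φ],[-Φᵀ, G̃]]⁻¹ + [[0, Π],[-Πᵀ, 0]]. Then det(g + (C+F) g̃⁻¹ (C+F)ᵀ) = det²(1 - FΠᵀ) · det(G + (Φ + F') G̃⁻¹ (Φ + F')ᵀ), where F' = (1 - FΠᵀ)⁻¹F. -/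
open Matrix

private lemma schur_posdef {n m : ℕ} {g : Matrix (Fin n) (Fin n) ℝ}
    {gt : Matrix (Fin m) (Fin m) ℝ} (X : Matrix (Fin n) (Fin m) ℝ)
    (hg : g.PosDef) (hgt : gt.PosDef) : (g + X * gt⁻¹ * Xᵀ).PosDef := by
  have h1 : (X * gt⁻¹ * Xᵀ).PosSemidef := by
    have := hgt.inv.posSemidef.mul_mul_conjTranspose_same X
    rwa [conjTranspose_eq_transpose_of_trivial] at this
  exact hg.add_posSemidef h1

private lemma det_fromBlocks_skew {n m : ℕ} (g : Matrix (Fin n) (Fin n) ℝ)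
    (gt : Matrix (Fin m) (Fin m) ℝ) (X : Matrix (Fin n) (Fin m) ℝ) (hgt : gt.PosDef) :
    (fromBlocks g X (-Xᵀ) gt).det = gt.det * (g + X * gt⁻¹ * Xᵀ).det := by
  have : Invertible gt := gt.invertibleOfIsUnitDet (isUnit_iff_ne_zero.2 hgt.det_pos.ne')
  rw [det_fromBlocks₂₂, invOf_eq_nonsing_inv, Matrix.mul_neg, sub_neg_eq_add]

/-- Open-closed membrane relations with fluctuation: if the closed variables `(g, g̃, C)` and the
open variables `(G, G̃, Φ)` (all metrics positive definite) are related by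
`[[g,C],[-Cᵀ,g̃]]⁻¹ = [[G,Φ],[-Φᵀ,G̃]]⁻¹ + [[0,Π],[-Πᵀ,0]]` with `1 - ΠᵀF` invertible, then
`det(g + (C+F) g̃⁻¹ (C+F)ᵀ) = det²(1 - FΠᵀ) · det(G + (Φ+F') G̃⁻¹ (Φ+F')ᵀ)`,
where `F' = (1 - FΠᵀ)⁻¹F`. -/
theorem open_closed_det_identity {n m : ℕ}
    (g G : Matrix (Fin n) (Fin n) ℝ) (gt Gt : Matrix (Fin m) (Fin m) ℝ)
    (C F Phi Pi : Matrix (Fin n) (Fin m) ℝ)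
    (hg : g.PosDef) (hgt : gt.PosDef) (hG : G.PosDef) (hGt : Gt.PosDef)
    (hPiF : IsUnit (1 - Piᵀ * F))
    (hoc : (fromBlocks g C (-Cᵀ) gt)⁻¹ =
      (fromBlocks G Phi (-Phiᵀ) Gt)⁻¹ + fromBlocks 0 Pi (-Piᵀ) 0) :
    (g + (C + F) * gt⁻¹ * (C + F)ᵀ).det =
      ((1 - F * Piᵀ).det)^2 *
        (G + (Phi + (1 - F * Piᵀ)⁻¹ * F) * Gt⁻¹ * (Phi + (1 - F * Piᵀ)⁻¹ * F)ᵀ).det := by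
  classical
  set F' : Matrix (Fin n) (Fin m) ℝ := (1 - F * Piᵀ)⁻¹ * F with hF'
  set M := fromBlocks g C (-Cᵀ) gt with hMdef
  set N := fromBlocks G Phi (-Phiᵀ) Gt with hNdef
  set P := fromBlocks (0 : Matrix (Fin n) (Fin n) ℝ) Pi (-Piᵀ)
      (0 : Matrix (Fin m) (Fin m) ℝ) with hPdef
  set Q := fromBlocks (0 : Matrix (Fin n) (Fin n) ℝ) F (-Fᵀ)
      (0 : Matrix (Fin m) (Fin m) ℝ) with hQdef
  set Q' := fromBlocks (0 : Matrix (Fin n) (Fin n) ℝ) F' (-F'ᵀ)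
      (0 : Matrix (Fin m) (Fin m) ℝ) with hQ'def
  -- determinant facts for the fluctuation factors
  have hd : (1 - Piᵀ * F).det = (1 - F * Piᵀ).det := by
    calc (1 - Piᵀ * F).det = (1 + Piᵀ * (-F)).det := by rw [Matrix.mul_neg, ← sub_eq_add_neg]
      _ = (1 + (-F) * Piᵀ).det := (det_one_add_mul_comm _ _).symm
      _ = (1 - F * Piᵀ).det := by rw [Matrix.neg_mul, ← sub_eq_add_neg]
  have hdu : IsUnit (1 - F * Piᵀ).det := by
    rw [← hd]; exact (isUnit_iff_isUnit_det _).1 hPiF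
  have hd2 : (1 - Fᵀ * Pi).det = (1 - F * Piᵀ).det := by
    rw [show (1 : Matrix (Fin m) (Fin m) ℝ) - Fᵀ * Pi = (1 - Piᵀ * F)ᵀ by
      rw [transpose_sub, transpose_mul, transpose_one, transpose_transpose], det_transpose, hd]
  have hd3 : (1 - Pi * Fᵀ).det = (1 - F * Piᵀ).det := by
    rw [show (1 : Matrix (Fin n) (Fin n) ℝ) - Pi * Fᵀ = (1 - F * Piᵀ)ᵀ by
      rw [transpose_sub, transpose_mul, transpose_one, transpose_transpose], det_transpose]
  -- positive definiteness of Schur complements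
  have hS : (g + C * gt⁻¹ * Cᵀ).PosDef := schur_posdef C hg hgt
  have hSo : (G + Phi * Gt⁻¹ * Phiᵀ).PosDef := schur_posdef Phi hG hGt
  have hdgt : IsUnit gt.det := isUnit_iff_ne_zero.2 hgt.det_pos.ne'
  have hdGt : IsUnit Gt.det := isUnit_iff_ne_zero.2 hGt.det_pos.ne'
  have hdM : M.det = gt.det * (g + C * gt⁻¹ * Cᵀ).det := det_fromBlocks_skew g gt C hgt
  have hdN : N.det = Gt.det * (G + Phi * Gt⁻¹ * Phiᵀ).det := det_fromBlocks_skew G Gt Phi hGt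
  have hMu : IsUnit M.det := by
    rw [hdM]; exact hdgt.mul (isUnit_iff_ne_zero.2 hS.det_pos.ne')
  have hNu : IsUnit N.det := by
    rw [hdN]; exact hdGt.mul (isUnit_iff_ne_zero.2 hSo.det_pos.ne')
  -- relation M * (1 + P * N) = N
  have h1 : M * (1 + P * N) = N := by
    calc M * (1 + P * N) = M * ((N⁻¹ + P) * N) := by
          rw [add_mul, nonsing_inv_mul _ hNu]
      _ = M * (M⁻¹ * N) := by rw [← hoc]
      _ = N := by rw [← Matrix.mul_assoc, mul_nonsing_inv _ hMu, Matrix.one_mul]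
  -- (1 + Q * P) in block form
  have hQP : (1 : Matrix (Fin n ⊕ Fin m) (Fin n ⊕ Fin m) ℝ) + Q * P =
      fromBlocks (1 - F * Piᵀ) 0 0 (1 - Fᵀ * Pi) := by
    rw [hQdef, hPdef, fromBlocks_multiply, ← fromBlocks_one, fromBlocks_add]
    congr 1 <;> simp [Matrix.mul_neg, Matrix.neg_mul, sub_eq_add_neg]
  -- (1 + Q * P) * Q' = Q
  have ha : (1 - F * Piᵀ) * F' = F := by
    rw [hF', ← Matrix.mul_assoc, mul_nonsing_inv _ hdu, Matrix.one_mul]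
  have hb : (1 - Fᵀ * Pi) * F'ᵀ = Fᵀ := by
    have hcross : (1 - Fᵀ * Pi) * Fᵀ = Fᵀ * (1 - Pi * Fᵀ) := by
      rw [Matrix.sub_mul, Matrix.mul_sub, Matrix.one_mul, Matrix.mul_one, Matrix.mul_assoc]
    rw [hF', transpose_mul, transpose_nonsing_inv, transpose_sub, transpose_mul, transpose_one,
      transpose_transpose, ← Matrix.mul_assoc, hcross, Matrix.mul_assoc,
      mul_nonsing_inv _ (by rw [hd3]; exact hdu), Matrix.mul_one]
  have h3 : ((1 : Matrix (Fin n ⊕ Fin m) (Fin n ⊕ Fin m) ℝ) + Q * P) * Q' = Q := by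
    rw [hQP, hQ'def, hQdef, fromBlocks_multiply]
    congr 1 <;> simp [ha, hb, Matrix.mul_neg]
  -- main multiplicative identity
  have h2 : (M + Q) * (1 + P * N) = (1 + Q * P) * (N + Q') := by
    have lhs : (M + Q) * (1 + P * N) = N + (Q + Q * P * N) := by
      rw [Matrix.add_mul, h1, Matrix.mul_add, Matrix.mul_one, ← Matrix.mul_assoc]
    have rhs : (1 + Q * P) * (N + Q') = N + (Q * P * N + Q) := by
      rw [Matrix.mul_add, h3, Matrix.add_mul, Matrix.one_mul, add_assoc]
    rw [lhs, rhs, add_comm (Q * P * N) Q]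
  -- determinant of (1 + Q * P)
  have hQPdet : ((1 : Matrix (Fin n ⊕ Fin m) (Fin n ⊕ Fin m) ℝ) + Q * P).det =
      (1 - F * Piᵀ).det ^ 2 := by
    rw [hQP, det_fromBlocks_zero₂₁, hd2, sq]
  -- determinant relations
  have e1 : M.det * (1 + P * N).det = N.det := by rw [← det_mul, h1]
  have e2 : (M + Q).det * (1 + P * N).det = (1 - F * Piᵀ).det ^ 2 * (N + Q').det := by
    rw [← det_mul, h2, det_mul, hQPdet]
  have key : (M + Q).det * N.det = (1 - F * Piᵀ).det ^ 2 * (N + Q').det * M.det := by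
    linear_combination M.det * e2 - (M + Q).det * e1 + (M + Q).det * (1 + P * N).det * e1
      - (M + Q).det * (1 + P * N).det * e1
  -- Schur determinant expansions of M + Q and N + Q'
  have hMQ : M + Q = fromBlocks g (C + F) (-(C + F)ᵀ) gt := by
    rw [hMdef, hQdef, fromBlocks_add, add_zero, add_zero, transpose_add, neg_add]
  have hNQ : N + Q' = fromBlocks G (Phi + F') (-(Phi + F')ᵀ) Gt := by
    rw [hNdef, hQ'def, fromBlocks_add, add_zero, add_zero, transpose_add, neg_add]
  have hdMQ : (M + Q).det = gt.det * (g + (C + F) * gt⁻¹ * (C + F)ᵀ).det := by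
    rw [hMQ]; exact det_fromBlocks_skew g gt (C + F) hgt
  have hdNQ : (N + Q').det = Gt.det * (G + (Phi + F') * Gt⁻¹ * (Phi + F')ᵀ).det := by
    rw [hNQ]; exact det_fromBlocks_skew G Gt (Phi + F') hGt
  -- equality of the closed and open Schur complements
  letI igt : Invertible gt := gt.invertibleOfIsUnitDet hdgt
  letI iGt : Invertible Gt := Gt.invertibleOfIsUnitDet hdGt
  have hSeq : g - C * ⅟gt * (-Cᵀ) = g + C * gt⁻¹ * Cᵀ := by
    rw [invOf_eq_nonsing_inv, Matrix.mul_neg, sub_neg_eq_add]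
  have hSoeq : G - Phi * ⅟Gt * (-Phiᵀ) = G + Phi * Gt⁻¹ * Phiᵀ := by
    rw [invOf_eq_nonsing_inv, Matrix.mul_neg, sub_neg_eq_add]
  letI iS : Invertible (g - C * ⅟gt * (-Cᵀ)) := by
    rw [hSeq]; exact _root_.Matrix.invertibleOfIsUnitDet _ (isUnit_iff_ne_zero.2 hS.det_pos.ne')
  letI iSo : Invertible (G - Phi * ⅟Gt * (-Phiᵀ)) := by
    rw [hSoeq]; exact _root_.Matrix.invertibleOfIsUnitDet _ (isUnit_iff_ne_zero.2 hSo.det_pos.ne')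
  letI iM : Invertible M := fromBlocks₂₂Invertible g C (-Cᵀ) gt
  letI iN : Invertible N := fromBlocks₂₂Invertible G Phi (-Phiᵀ) Gt
  have hMinvB : M⁻¹ = fromBlocks (⅟(g - C * ⅟gt * (-Cᵀ)))
      (-(⅟(g - C * ⅟gt * (-Cᵀ)) * C * ⅟gt)) (-(⅟gt * (-Cᵀ) * ⅟(g - C * ⅟gt * (-Cᵀ))))
      (⅟gt + ⅟gt * (-Cᵀ) * ⅟(g - C * ⅟gt * (-Cᵀ)) * C * ⅟gt) := by
    rw [hMdef, ← invOf_eq_nonsing_inv, invOf_fromBlocks₂₂_eq]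
  have hNinvB : N⁻¹ = fromBlocks (⅟(G - Phi * ⅟Gt * (-Phiᵀ)))
      (-(⅟(G - Phi * ⅟Gt * (-Phiᵀ)) * Phi * ⅟Gt)) (-(⅟Gt * (-Phiᵀ) * ⅟(G - Phi * ⅟Gt * (-Phiᵀ))))
      (⅟Gt + ⅟Gt * (-Phiᵀ) * ⅟(G - Phi * ⅟Gt * (-Phiᵀ)) * Phi * ⅟Gt) := by
    rw [hNdef, ← invOf_eq_nonsing_inv, invOf_fromBlocks₂₂_eq]
  have htl : ⅟(g - C * ⅟gt * (-Cᵀ)) = ⅟(G - Phi * ⅟Gt * (-Phiᵀ)) := by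
    have hoc' := hoc
    rw [hMinvB, hNinvB, hPdef, fromBlocks_add] at hoc'
    have := (fromBlocks_inj.1 hoc').1
    rwa [add_zero] at this
  have hSinv : (g + C * gt⁻¹ * Cᵀ)⁻¹ = (G + Phi * Gt⁻¹ * Phiᵀ)⁻¹ := by
    have h1' := htl
    simp only [invOf_eq_nonsing_inv] at h1'
    rw [show g - C * gt⁻¹ * (-Cᵀ) = g + C * gt⁻¹ * Cᵀ by rw [Matrix.mul_neg, sub_neg_eq_add],
      show G - Phi * Gt⁻¹ * (-Phiᵀ) = G + Phi * Gt⁻¹ * Phiᵀ by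
        rw [Matrix.mul_neg, sub_neg_eq_add]] at h1'
    exact h1'
  have hSSo : g + C * gt⁻¹ * Cᵀ = G + Phi * Gt⁻¹ * Phiᵀ := by
    rw [← nonsing_inv_nonsing_inv _ (isUnit_iff_ne_zero.2 hS.det_pos.ne'), hSinv,
      nonsing_inv_nonsing_inv _ (isUnit_iff_ne_zero.2 hSo.det_pos.ne')]
  -- final cancellation
  have hSodet0 : (G + Phi * Gt⁻¹ * Phiᵀ).det ≠ 0 := hSo.det_pos.ne'
  have hgt0 : gt.det ≠ 0 := hgt.det_pos.ne'
  have hGt0 : Gt.det ≠ 0 := hGt.det_pos.ne'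
  rw [hdMQ, hdNQ, hdM, hdN, hSSo] at key
  apply mul_left_cancel₀ (mul_ne_zero hgt0 (mul_ne_zero hGt0 hSodet0))
  linear_combination key
end

section
/- Let V be a finite-dimensional real vector space with inner product g, C: V → V* a skew-symmetric linear map (a 2-form), and P: V → V the g-orthogonal projector with ker P = ker C. Then there exists a unique skew-symmetric linear map Π: V* → V (a 2-vector) such that ΠC = P and PΠ = Π. -/
/-!
For `Π` with `P Π = Π`, being skew with `Π C = P` is equivalent to `C Π = Pᵀ`, where
`Pᵀ β = β ∘ P`. A solution of `C Π = Pᵀ` exists because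
`range Pᵀ = (ker P)⁰ = (ker C)⁰ = range Cᵀ = range C`, the last equality by skewness of `C`.
It is unique because `ker C = ker P` meets `range P` trivially.
-/

open RealInnerProductSpace

open Module LinearMap

namespace LinearMap

section Ring

variable {R M E : Type*} [Ring R] [AddCommGroup M] [Module R M] [AddCommGroup E] [Module R E]

theorem eq_of_comp_eq_comp_of_ker_eq {N : Type*} [AddCommGroup N] [Module R N]
    {P : M →ₗ[R] M} {C : M →ₗ[R] N} (hker : ker P = ker C)
    {Q Q' : E →ₗ[R] M} (hQ : P ∘ₗ Q = Q) (hQ' : P ∘ₗ Q' = Q') (h : C ∘ₗ Q = C ∘ₗ Q') :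
    Q = Q' := by
  ext x
  have hmem : Q x - Q' x ∈ ker P := by
    rw [hker, mem_ker, map_sub, sub_eq_zero]
    exact LinearMap.congr_fun h x
  have hfix : P (Q x - Q' x) = Q x - Q' x := by
    rw [map_sub, ← comp_apply P Q, ← comp_apply P Q', hQ, hQ']
  rw [← sub_eq_zero, ← hfix, mem_ker.mp hmem]

end Ring

variable {K V : Type*} [Field K] [AddCommGroup V] [Module K V]
  {C : V →ₗ[K] Dual K V} {P : V →ₗ[K] V}

theorem range_dualMap_eq_range_of_skew [FiniteDimensional K V]
    (hC : ∀ v w, C v w = -C w v) : range C.dualMap = range C := by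
  have hdual : C.dualMap ∘ₗ Dual.eval K V = -C := by
    ext v w
    exact hC w v
  rw [← range_neg C, ← hdual, range_comp_of_range_eq_top]
  exact range_eq_top.mpr (evalEquiv K V).surjective

theorem dualMap_comp_eq_self_of_skew (hC : ∀ v w, C v w = -C w v) (hCP : C ∘ₗ P = C) :
    P.dualMap ∘ₗ C = C := by
  ext v w
  calc C v (P w) = -C (P w) v := hC _ _
    _ = -C w v := by rw [← comp_apply C P, hCP]
    _ = C v w := (hC v w).symm

theorem comp_eq_dualMap_of_skew (hC : ∀ v w, C v w = -C w v) {Q : Dual K V →ₗ[K] V}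
    (hQ : ∀ α β : Dual K V, α (Q β) = -β (Q α)) (hQC : Q ∘ₗ C = P) : C ∘ₗ Q = P.dualMap := by
  ext β w
  calc C (Q β) w = -C w (Q β) := hC _ _
    _ = β (Q (C w)) := by rw [hQ, neg_neg]
    _ = β (P w) := by rw [← comp_apply Q C, hQC]

theorem skew_of_comp_eq_dualMap (hC : ∀ v w, C v w = -C w v) {Q : Dual K V →ₗ[K] V}
    (hPQ : P ∘ₗ Q = Q) (hCQ : C ∘ₗ Q = P.dualMap) (α β : Dual K V) : α (Q β) = -β (Q α) := by
  have hCQ_apply (γ : Dual K V) (v : V) : C (Q γ) v = γ (P v) := by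
    rw [← comp_apply C Q, hCQ]
    rfl
  have hPQ_apply (γ : Dual K V) : P (Q γ) = Q γ := by rw [← comp_apply P Q, hPQ]
  calc α (Q β) = C (Q α) (Q β) := by rw [hCQ_apply, hPQ_apply]
    _ = -C (Q β) (Q α) := hC _ _
    _ = -β (Q α) := by rw [hCQ_apply, hPQ_apply]

theorem comp_eq_of_comp_eq_dualMap (hC : ∀ v w, C v w = -C w v) (hP : IsIdempotentElem P)
    (hker : ker P = ker C) {Q : Dual K V →ₗ[K] V} (hPQ : P ∘ₗ Q = Q)
    (hCQ : C ∘ₗ Q = P.dualMap) : Q ∘ₗ C = P := by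
  have hCP : C ∘ₗ P = C := (hP.comp_eq_left_iff C).mpr hker.le
  ext v
  have hmem : Q (C v) - v ∈ ker P := by
    rw [hker, mem_ker, map_sub, sub_eq_zero, ← comp_apply C Q, hCQ,
      ← comp_apply P.dualMap C, dualMap_comp_eq_self_of_skew hC hCP]
  rw [mem_ker, map_sub, sub_eq_zero, ← comp_apply P Q, hPQ] at hmem
  exact hmem

theorem exists_comp_eq_dualMap [FiniteDimensional K V] (hC : ∀ v w, C v w = -C w v)
    (hP : IsIdempotentElem P) (hker : ker P = ker C) :
    ∃ Q : Dual K V →ₗ[K] V, P ∘ₗ Q = Q ∧ C ∘ₗ Q = P.dualMap := by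
  have hrange : range P.dualMap ≤ range C := by
    rw [range_dualMap_eq_dualAnnihilator_ker, hker, ← range_dualMap_eq_dualAnnihilator_ker,
      range_dualMap_eq_range_of_skew hC]
  obtain ⟨S, hS⟩ := projective_lifting_property C.rangeRestrict
    (P.dualMap.codRestrict (range C) fun β => hrange (mem_range_self _ β)) C.surjective_rangeRestrict
  refine ⟨P ∘ₗ S, by rw [← comp_assoc, show P ∘ₗ P = P from hP], ?_⟩
  rw [← comp_assoc, (hP.comp_eq_left_iff C).mpr hker.le]
  ext β : 1
  exact congr_arg Subtype.val (LinearMap.congr_fun hS β)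

end LinearMap

theorem two_form_pseudoinverse_general {V : Type*} [NormedAddCommGroup V] [InnerProductSpace ℝ V]
    [FiniteDimensional ℝ V]
    (C : V →ₗ[ℝ] (V →ₗ[ℝ] ℝ)) (hC : ∀ v w : V, C v w = - C w v)
    (P : V →ₗ[ℝ] V) (hPidem : P ∘ₗ P = P)
    (hker : LinearMap.ker P = LinearMap.ker C) :
    ∃! Pi : (V →ₗ[ℝ] ℝ) →ₗ[ℝ] V,
      (∀ α β : V →ₗ[ℝ] ℝ, α (Pi β) = - β (Pi α)) ∧ Pi ∘ₗ C = P ∧ P ∘ₗ Pi = Pi := by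
  obtain ⟨Pi, hPPi, hCPi⟩ := exists_comp_eq_dualMap hC hPidem hker
  refine ⟨Pi, ⟨skew_of_comp_eq_dualMap hC hPPi hCPi,
    comp_eq_of_comp_eq_dualMap hC hPidem hker hPPi hCPi, hPPi⟩, ?_⟩
  rintro Q ⟨hQ, hQC, hPQ⟩
  exact eq_of_comp_eq_comp_of_ker_eq hker hPQ hPPi
    ((comp_eq_dualMap_of_skew hC hQ hQC).trans hCPi.symm)

/-- Pseudoinverse of a 2-form: let `V` be a finite-dimensional real inner product space,
`C : V → V*` a skew-symmetric linear map (a 2-form) and `P : V → V` the orthogonal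
projector (idempotent and self-adjoint) with `ker P = ker C`. Then there is a unique
skew-symmetric linear map `Π : V* → V` (a 2-vector) with `Π ∘ C = P` and `P ∘ Π = Π`. -/
theorem two_form_pseudoinverse {V : Type*} [NormedAddCommGroup V] [InnerProductSpace ℝ V]
    [FiniteDimensional ℝ V]
    (C : V →ₗ[ℝ] (V →ₗ[ℝ] ℝ)) (hC : ∀ v w : V, C v w = - C w v)
    (P : V →ₗ[ℝ] V) (hPidem : P ∘ₗ P = P)
    (hPsa : ∀ v w : V, ⟪P v, w⟫ = ⟪v, P w⟫)
    (hker : LinearMap.ker P = LinearMap.ker C) :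
    ∃! Pi : (V →ₗ[ℝ] ℝ) →ₗ[ℝ] V,
      (∀ α β : V →ₗ[ℝ] ℝ, α (Pi β) = - β (Pi α)) ∧ Pi ∘ₗ C = P ∧ P ∘ₗ Pi = Pi :=
  two_form_pseudoinverse_general C hC P hPidem hker
end

section
/- For p > 1, if Π is a Nambu-Poisson (p+1)-vector field on a manifold M and f is a smooth function on M, then fΠ is again a Nambu-Poisson (p+1)-vector field. -/
/-!
Write `{c, x}` for `B (Fin.snoc c x)`. By the Leibniz rule, `f * B` satisfies the fundamental
identity as soon as `B` satisfies the Plücker relations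
`{c, f} {g} = ∑ᵢ {c, gᵢ} {g₁, …, f, …, g_{p+1}}` (`f` in slot `i`), i.e. as soon as `B` is
pointwise decomposable. For `p > 1` these relations follow from the fundamental identity:
polarizing it through the Leibniz rule in one slot of `c`, and using a second slot, gives
`2 {c, f}² D = 0` for the defect `D` of the relation. Since `D` changes sign when `f` is exchanged
with any `gᵢ`, also `2 {c, gᵢ}² D = 0`. In a reduced ring where `2` is regular, such as `C^∞(M)`,
`D` is then annihilated by every factor `{c, ·}` occurring in `D` itself, so `D² = 0` and `D = 0`.
-/

open scoped Manifold BigOperators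

/-- A bracket `B` of arity `p+1` on a commutative ring is an alternating multiderivation
(i.e. it corresponds to a `(p+1)`-vector field when the ring is the ring of smooth functions
on a manifold): it is additive and satisfies the Leibniz rule in each argument, and it
vanishes whenever two arguments coincide. -/
def IsAltMultiDeriv {A : Type*} [CommRing A] (p : ℕ) (B : (Fin (p + 1) → A) → A) : Prop :=
  (∀ (F : Fin (p + 1) → A) (i : Fin (p + 1)) (g h : A),
      B (Function.update F i (g + h)) = B (Function.update F i g) + B (Function.update F i h)) ∧
  (∀ (F : Fin (p + 1) → A) (i : Fin (p + 1)) (g h : A),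
      B (Function.update F i (g * h)) =
        g * B (Function.update F i h) + h * B (Function.update F i g)) ∧
  (∀ (F : Fin (p + 1) → A) (i j : Fin (p + 1)), i ≠ j → F i = F j → B F = 0)

/-- The fundamental identity of a Nambu-Poisson bracket of arity `p+1`:
`{f₁,…,f_p,{g₁,…,g_{p+1}}} = ∑ᵢ {g₁,…,{f₁,…,f_p,gᵢ},…,g_{p+1}}`.  This is the
bracket formulation of `L_{Π♯(df₁ ∧ ⋯ ∧ df_p)} Π = 0`. -/
def FundamentalIdentity {A : Type*} [CommRing A] (p : ℕ) (B : (Fin (p + 1) → A) → A) : Prop :=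
  ∀ (f : Fin p → A) (g : Fin (p + 1) → A),
    B (Fin.snoc f (B g)) = ∑ i : Fin (p + 1), B (Function.update g i (B (Fin.snoc f (g i))))

open Function

theorem Fin.sum_map_snoc_mul_update_snoc {R : Type*} [NonUnitalNonAssocSemiring R] {p : ℕ}
    (B : (Fin (p + 1) → R) → R) (c w : Fin p → R) (y z : R) :
    ∑ i, B (Fin.snoc c ((Fin.snoc w y : Fin (p + 1) → R) i)) * B (update (Fin.snoc w y) i z) =
      ∑ i, B (Fin.snoc c (w i)) * B (Fin.snoc (update w i z) y) +
        B (Fin.snoc c y) * B (Fin.snoc w z) := by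
  simp only [Fin.sum_univ_castSucc, Fin.snoc_castSucc, Fin.snoc_last, Fin.update_snoc_last,
    ← Fin.snoc_update]

/-- At a point, `Π ∈ Λᵖ⁺¹ V` is decomposable iff `(i_{dc₁ ∧ ⋯ ∧ dc_p} Π) ∧ Π = 0` for all `c`;
evaluated on `df ∧ dg₁ ∧ ⋯ ∧ dg_{p+1}` these Plücker relations read `pluckerDefect B c f g = 0`. -/
def pluckerDefect {A : Type*} [CommRing A] {p : ℕ} (B : (Fin (p + 1) → A) → A) (c : Fin p → A)
    (f : A) (g : Fin (p + 1) → A) : A :=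
  B (Fin.snoc c f) * B g - ∑ i, B (Fin.snoc c (g i)) * B (update g i f)

theorem mul_eq_zero_of_two_mul_sq_mul_eq_zero {R : Type*} [CommRing R] [IsReduced R]
    (h2 : IsLeftRegular (2 : R)) {a d : R} (h : 2 * a ^ 2 * d = 0) : a * d = 0 := by
  have had : a ^ 2 * d = 0 := h2 (show 2 * (a ^ 2 * d) = 2 * 0 by rw [← mul_assoc, h, mul_zero])
  exact IsReduced.eq_zero _ ⟨2, by linear_combination d * had⟩

namespace IsAltMultiDeriv

variable {A : Type*} [CommRing A] {p : ℕ} {B : (Fin (p + 1) → A) → A}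

theorem map_update_add (hB : IsAltMultiDeriv p B) (F : Fin (p + 1) → A) (i : Fin (p + 1))
    (g h : A) : B (update F i (g + h)) = B (update F i g) + B (update F i h) :=
  hB.1 F i g h

theorem map_update_mul (hB : IsAltMultiDeriv p B) (F : Fin (p + 1) → A) (i : Fin (p + 1))
    (g h : A) : B (update F i (g * h)) = g * B (update F i h) + h * B (update F i g) :=
  hB.2.1 F i g h

theorem map_eq_zero_of_eq (hB : IsAltMultiDeriv p B) {F : Fin (p + 1) → A} {i j : Fin (p + 1)}
    (hij : i ≠ j) (hF : F i = F j) : B F = 0 :=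
  hB.2.2 F i j hij hF

theorem map_update_update_self (hB : IsAltMultiDeriv p B) {i j : Fin (p + 1)} (hij : i ≠ j)
    (F : Fin (p + 1) → A) (a : A) : B (update (update F i a) j a) = 0 :=
  hB.map_eq_zero_of_eq hij (by simp [update_of_ne hij])

theorem map_update_update_swap (hB : IsAltMultiDeriv p B) {i j : Fin (p + 1)} (hij : i ≠ j)
    (F : Fin (p + 1) → A) (a b : A) :
    B (update (update F i a) j b) = -B (update (update F i b) j a) := by
  have add_inner (x y z : A) : B (update (update F i (x + y)) j z) =
      B (update (update F i x) j z) + B (update (update F i y) j z) := by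
    rw [update_comm hij, update_comm hij, update_comm hij]
    exact hB.map_update_add _ i x y
  have h0 := hB.map_update_update_self hij F (a + b)
  rw [hB.map_update_add, add_inner, add_inner, hB.map_update_update_self hij,
    hB.map_update_update_self hij] at h0
  linear_combination h0

theorem map_snoc_update_swap (hB : IsAltMultiDeriv p B) (c : Fin p → A) (i : Fin p) (a b : A) :
    B (Fin.snoc (update c i a) b) = -B (Fin.snoc (update c i b) a) := by
  simpa [← Fin.snoc_update, Fin.update_snoc_last] using
    hB.map_update_update_swap (Fin.castSucc_lt_last i).ne (Fin.snoc c 0) a b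

theorem map_snoc_update_update_swap (hB : IsAltMultiDeriv p B) {i j : Fin p} (hij : i ≠ j)
    (c : Fin p → A) (a b z : A) :
    B (Fin.snoc (update (update c i a) j b) z) = -B (Fin.snoc (update (update c i b) j a) z) := by
  simpa [← Fin.snoc_update] using
    hB.map_update_update_swap (Fin.castSucc_injective p |>.ne hij) (Fin.snoc c z) a b

theorem map_snoc_self (hB : IsAltMultiDeriv p B) (c : Fin p → A) (i : Fin p) :
    B (Fin.snoc c (c i)) = 0 :=
  hB.map_eq_zero_of_eq (Fin.castSucc_lt_last i).ne (by simp)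

theorem map_snoc_update_self (hB : IsAltMultiDeriv p B) (c : Fin p → A) (i : Fin p) (a : A) :
    B (Fin.snoc (update c i a) a) = 0 :=
  hB.map_eq_zero_of_eq (Fin.castSucc_lt_last i).ne (by simp)

theorem mul_left (hB : IsAltMultiDeriv p B) (f : A) : IsAltMultiDeriv p (fun F => f * B F) :=
  ⟨fun F i g h => by dsimp only; rw [hB.map_update_add, mul_add],
    fun F i g h => by dsimp only; rw [hB.map_update_mul]; ring,
    fun _ _ _ hij hF => by dsimp only; rw [hB.map_eq_zero_of_eq hij hF, mul_zero]⟩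

theorem fundamentalIdentity_mul_left (hB : IsAltMultiDeriv p B) (hFI : FundamentalIdentity p B)
    (f : A) (hf : ∀ c g, pluckerDefect B c f g = 0) :
    FundamentalIdentity p (fun F => f * B F) := by
  intro c g
  dsimp only
  have hlast : B (Fin.snoc c (f * B g)) = f * B (Fin.snoc c (B g)) + B g * B (Fin.snoc c f) := by
    simpa [Fin.update_snoc_last] using hB.map_update_mul (Fin.snoc c (B g)) (Fin.last p) f (B g)
  simp only [hlast, hB.map_update_mul, hFI c g, mul_add, Finset.sum_add_distrib, ← Finset.mul_sum]
  have hP := hf c g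
  unfold pluckerDefect at hP
  linear_combination f * hP

theorem pluckerDefect_exchange (hB : IsAltMultiDeriv p B) (c : Fin p → A) (f : A)
    (g : Fin (p + 1) → A) (i : Fin (p + 1)) :
    pluckerDefect B c (g i) (update g i f) = -pluckerDefect B c f g := by
  have hsum : ∑ j, (B (Fin.snoc c (update g i f j)) * B (update (update g i f) j (g i)) +
        B (Fin.snoc c (g j)) * B (update g j f)) =
      B (Fin.snoc c f) * B g + B (Fin.snoc c (g i)) * B (update g i f) := by
    rw [Finset.sum_eq_single i]
    · rw [update_self, update_idem, update_eq_self]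
    · intro j _ hji
      rw [update_of_ne hji, hB.map_update_update_swap (Ne.symm hji), update_eq_self]
      ring
    · simp
  unfold pluckerDefect
  rw [Finset.sum_add_distrib] at hsum
  linear_combination -hsum

theorem fundamentalIdentity_polarization (hB : IsAltMultiDeriv p B)
    (hFI : FundamentalIdentity p B) (c : Fin p → A) (k : Fin p) (a b : A) (g : Fin (p + 1) → A) :
    ∑ i, B (Fin.snoc (update c k b) (g i)) * B (update g i a) +
      ∑ i, B (Fin.snoc (update c k a) (g i)) * B (update g i b) = 0 := by
  have leibniz (z : A) : B (Fin.snoc (update c k (a * b)) z) =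
      a * B (Fin.snoc (update c k b) z) + b * B (Fin.snoc (update c k a) z) := by
    simpa [← Fin.snoc_update] using hB.map_update_mul (Fin.snoc c z) k.castSucc a b
  have h := hFI (update c k (a * b)) g
  simp only [leibniz, hB.map_update_add, hB.map_update_mul] at h
  rw [hFI (update c k a) g, hFI (update c k b) g] at h
  simp only [Finset.sum_add_distrib, ← Finset.mul_sum] at h
  linear_combination -h

theorem two_mul_pluckerDefect_self (hB : IsAltMultiDeriv p B) (hFI : FundamentalIdentity p B)
    (c : Fin p → A) (j : Fin p) (g : Fin (p + 1) → A) :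
    2 * pluckerDefect B c (c j) g = 0 := by
  have h := hB.fundamentalIdentity_polarization hFI c j (c j) (c j) g
  rw [update_eq_self] at h
  unfold pluckerDefect
  rw [hB.map_snoc_self]
  linear_combination -h

theorem sum_map_snoc_update_update_mul (hB : IsAltMultiDeriv p B) {j k : Fin p} (hjk : j ≠ k)
    (c : Fin p → A) (u x : A) (h : Fin p → A) :
    ∑ i, B (Fin.snoc c (update (update c k u) j x i)) * h i =
      B (Fin.snoc c x) * h j + B (Fin.snoc c u) * h k := by
  rw [Finset.sum_eq_add_of_mem j k (Finset.mem_univ _) (Finset.mem_univ _) hjk,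
    update_self, update_of_ne hjk.symm, update_self]
  rintro i - ⟨hij, hik⟩
  rw [update_of_ne hij, update_of_ne hik, hB.map_snoc_self, zero_mul]

/-- The three-term Plücker relation for the 2-form `(y, z) ↦ B (snoc (update c k y) z)`, with
`c k` as one of the four arguments; the second index `j ≠ k` is where `p > 1` enters. -/
theorem two_mul_plucker_update (hB : IsAltMultiDeriv p B) (hFI : FundamentalIdentity p B)
    {j k : Fin p} (hjk : j ≠ k) (c : Fin p → A) (f u x : A) :
    2 * (B (Fin.snoc c f) * B (Fin.snoc (update c k u) x)) =
      2 * (B (Fin.snoc c x) * B (Fin.snoc (update c k u) f) +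
        B (Fin.snoc c u) * B (Fin.snoc (update c k f) x)) := by
  have hcj (y : A) : update (update c k y) j (c j) = update c k y := by
    rw [show c j = update c k y j from (update_of_ne hjk y c).symm, update_eq_self]
  have e_last :
      B (Fin.snoc (update (update c k u) j x) (c j)) = -B (Fin.snoc (update c k u) x) := by
    rw [hB.map_snoc_update_swap, hcj]
  have e_j : update (update (update c k u) j x) j (c j) = update c k u := by
    rw [update_idem, hcj]
  have e_k : B (Fin.snoc (update (update (update c k u) j x) k (c j)) f) =
      B (Fin.snoc (update c k f) x) := by
    rw [update_comm hjk, update_idem, hB.map_snoc_update_swap,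
      hB.map_snoc_update_update_swap hjk.symm, hcj, neg_neg]
  have h := hB.two_mul_pluckerDefect_self hFI c j (Fin.snoc (update (update c k u) j x) f)
  unfold pluckerDefect at h
  rw [Fin.sum_map_snoc_mul_update_snoc, hB.map_snoc_self,
    hB.sum_map_snoc_update_update_mul hjk, e_j, e_k, e_last] at h
  linear_combination h

theorem two_mul_sq_mul_pluckerDefect (hB : IsAltMultiDeriv p B) (hFI : FundamentalIdentity p B)
    {j k : Fin p} (hjk : j ≠ k) (c : Fin p → A) (f : A) (g : Fin (p + 1) → A) :
    2 * B (Fin.snoc c f) ^ 2 * pluckerDefect B c f g = 0 := by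
  obtain ⟨w, u, rfl⟩ : ∃ w u, g = Fin.snoc w u :=
    ⟨Fin.init g, g (Fin.last p), (Fin.snoc_init_self g).symm⟩
  have hD : pluckerDefect B c f (Fin.snoc w u) = B (Fin.snoc c f) * B (Fin.snoc w u) -
      B (Fin.snoc c u) * B (Fin.snoc w f) -
      ∑ i, B (Fin.snoc c (w i)) * B (Fin.snoc (update w i f) u) := by
    unfold pluckerDefect
    rw [Fin.sum_map_snoc_mul_update_snoc]
    ring
  have ha := hB.fundamentalIdentity_polarization hFI c k (c k) u (Fin.snoc w f)
  rw [update_eq_self, Fin.sum_map_snoc_mul_update_snoc, Fin.sum_map_snoc_mul_update_snoc] at ha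
  have hd := hB.fundamentalIdentity_polarization hFI c k (c k) f (Fin.snoc w f)
  rw [update_eq_self, Fin.sum_map_snoc_mul_update_snoc, Fin.sum_map_snoc_mul_update_snoc] at hd
  simp only [hB.map_snoc_update_self, mul_zero, Finset.sum_const_zero, zero_add] at hd
  have hc := hB.two_mul_pluckerDefect_self hFI c k (Fin.snoc w f)
  unfold pluckerDefect at hc
  rw [Fin.sum_map_snoc_mul_update_snoc, hB.map_snoc_self] at hc
  have hb : 2 * B (Fin.snoc c f) *
        ∑ i, B (Fin.snoc (update c k u) (w i)) * B (Fin.snoc (update w i (c k)) f) =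
      2 * B (Fin.snoc (update c k u) f) *
          ∑ i, B (Fin.snoc c (w i)) * B (Fin.snoc (update w i (c k)) f) +
        2 * B (Fin.snoc c u) *
          ∑ i, B (Fin.snoc (update c k f) (w i)) * B (Fin.snoc (update w i (c k)) f) := by
    simp only [Finset.mul_sum, ← Finset.sum_add_distrib]
    refine Finset.sum_congr rfl fun i _ => ?_
    linear_combination B (Fin.snoc (update w i (c k)) f) *
      hB.two_mul_plucker_update hFI hjk c f u (w i)
  have he : ∑ i, B (Fin.snoc c (w i)) * B (Fin.snoc (update w i u) f) =
      -∑ i, B (Fin.snoc c (w i)) * B (Fin.snoc (update w i f) u) := by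
    rw [← Finset.sum_neg_distrib]
    refine Finset.sum_congr rfl fun i _ => ?_
    rw [hB.map_snoc_update_swap w i u f, mul_neg]
  rw [hD]
  linear_combination (2 * B (Fin.snoc c f) ^ 2) * ha - B (Fin.snoc c f) * hb
    + (B (Fin.snoc c f) * B (Fin.snoc (update c k u) f)) * hc
    - (2 * B (Fin.snoc c f) * B (Fin.snoc c u)) * hd
    - (2 * B (Fin.snoc c f) ^ 2) * he

theorem pluckerDefect_eq_zero [IsReduced A] (hB : IsAltMultiDeriv p B)
    (hFI : FundamentalIdentity p B) (h2 : IsLeftRegular (2 : A)) (hp : 1 < p) (c : Fin p → A)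
    (f : A) (g : Fin (p + 1) → A) : pluckerDefect B c f g = 0 := by
  have hjk : (⟨0, by omega⟩ : Fin p) ≠ ⟨1, hp⟩ := by simp [Fin.ext_iff]
  set D := pluckerDefect B c f g with hD
  have hf : B (Fin.snoc c f) * D = 0 :=
    mul_eq_zero_of_two_mul_sq_mul_eq_zero h2 (hB.two_mul_sq_mul_pluckerDefect hFI hjk c f g)
  have hg (i : Fin (p + 1)) : B (Fin.snoc c (g i)) * D = 0 := by
    have h := hB.two_mul_sq_mul_pluckerDefect hFI hjk c (g i) (update g i f)
    rw [hB.pluckerDefect_exchange, mul_neg, neg_eq_zero] at h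
    exact mul_eq_zero_of_two_mul_sq_mul_eq_zero h2 h
  have kill (x y : A) (hx : x * D = 0) : D * (x * y) = 0 := by
    rw [show D * (x * y) = x * D * y by ring, hx, zero_mul]
  refine IsReduced.eq_zero _ ⟨2, ?_⟩
  rw [sq]
  nth_rw 2 [hD]
  rw [pluckerDefect, mul_sub, Finset.mul_sum, kill _ _ hf,
    Finset.sum_eq_zero fun i _ => kill _ _ (hg i), sub_zero]

end IsAltMultiDeriv

namespace ContMDiffMap

variable {𝕜 : Type*} [NontriviallyNormedField 𝕜] {E : Type*} [NormedAddCommGroup E]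
  [NormedSpace 𝕜 E] {H : Type*} [TopologicalSpace H] {I : ModelWithCorners 𝕜 E H}
  {N : Type*} [TopologicalSpace N] [ChartedSpace H N] {E' : Type*} [NormedAddCommGroup E']
  [NormedSpace 𝕜 E'] {H' : Type*} [TopologicalSpace H'] {I' : ModelWithCorners 𝕜 E' H'}
  {n : WithTop ℕ∞} {R : Type*} [CommRing R] [TopologicalSpace R] [ChartedSpace H' R]
  [ContMDiffRing I' n R]

instance [IsReduced R] : IsReduced C^n⟮I, N; I', R⟯ :=
  isReduced_of_injective coeFnRingHom DFunLike.coe_injective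

theorem isLeftRegular_two (h2 : IsLeftRegular (2 : R)) : IsLeftRegular (2 : C^n⟮I, N; I', R⟯) :=
  fun f g hfg => ext fun x => h2 <| by
    have hfg' : f + f = g + g := by simpa only [two_mul] using hfg
    simpa only [two_mul, coe_add, Pi.add_apply] using congrArg (· x) hfg'

end ContMDiffMap

theorem smul_nambu_poisson_general
    {E : Type*} [NormedAddCommGroup E] [NormedSpace ℝ E]
    {H : Type*} [TopologicalSpace H] (I : ModelWithCorners ℝ E H)
    (M : Type*) [TopologicalSpace M] [ChartedSpace H M]
    {p : ℕ} (hp : 1 < p)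
    (B : (Fin (p + 1) → ContMDiffMap I 𝓘(ℝ, ℝ) M ℝ (⊤ : ℕ∞)) → ContMDiffMap I 𝓘(ℝ, ℝ) M ℝ (⊤ : ℕ∞))
    (hB : IsAltMultiDeriv p B) (hFI : FundamentalIdentity p B)
    (f : ContMDiffMap I 𝓘(ℝ, ℝ) M ℝ (⊤ : ℕ∞)) :
    IsAltMultiDeriv p (fun F => f * B F) ∧ FundamentalIdentity p (fun F => f * B F) := by
  have h2 : IsLeftRegular (2 : ContMDiffMap I 𝓘(ℝ, ℝ) M ℝ (⊤ : ℕ∞)) :=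
    ContMDiffMap.isLeftRegular_two two_ne_zero.isUnit.isRegular.left
  exact ⟨hB.mul_left f, hB.fundamentalIdentity_mul_left hFI f
    fun c g => hB.pluckerDefect_eq_zero hFI h2 hp c f g⟩

/-- For `p > 1`, multiplying a Nambu-Poisson `(p+1)`-vector field on a manifold `M`
(realized as its bracket on smooth functions) by a smooth function `f` yields again a
Nambu-Poisson `(p+1)`-vector field. -/
theorem smul_nambu_poisson
    {E : Type*} [NormedAddCommGroup E] [NormedSpace ℝ E]
    {H : Type*} [TopologicalSpace H] (I : ModelWithCorners ℝ E H)
    (M : Type*) [TopologicalSpace M] [ChartedSpace H M] [IsManifold I (⊤ : ℕ∞) M]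
    {p : ℕ} (hp : 1 < p)
    (B : (Fin (p + 1) → ContMDiffMap I 𝓘(ℝ, ℝ) M ℝ (⊤ : ℕ∞)) → ContMDiffMap I 𝓘(ℝ, ℝ) M ℝ (⊤ : ℕ∞))
    (hB : IsAltMultiDeriv p B) (hFI : FundamentalIdentity p B)
    (f : ContMDiffMap I 𝓘(ℝ, ℝ) M ℝ (⊤ : ℕ∞)) :
    IsAltMultiDeriv p (fun F => f * B F) ∧ FundamentalIdentity p (fun F => f * B F) :=
  smul_nambu_poisson_general I M hp B hB hFI f
end

section
/- Let p > 1, let Π be a (p+1)-vector at a point satisfying the decomposability (Nambu-Poisson) condition, and F a (p+1)-form at that point, both viewed as matrices Π: Λᵖ V* → V and F: Λᵖ V → V*. Then (1 - ΠFᵀ)(1 - (1/(p+1))⟨Π,F⟩)⁻¹ Π = Π, where ⟨Π,F⟩ = Πⁱᴶ F_{iJ} = Tr(ΠFᵀ), assuming 1 - (1/(p+1))⟨Π,F⟩ ≠ 0. -/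
open BigOperators

/-- The coefficient array of an alternating `k`-tensor on `ℝⁿ`. -/
def IsAltTensor (n k : ℕ) (T : (Fin k → Fin n) → ℝ) : Prop :=
  ∀ (v : Fin k → Fin n) (σ : Equiv.Perm (Fin k)),
    T (v ∘ σ) = ((Equiv.Perm.sign σ : ℤ) : ℝ) * T v

/-- A `k`-vector is decomposable iff it is of the form `e₁ ∧ ⋯ ∧ e_k` (possibly zero); in
components `T^{i₁…i_k} = det((e_a)^{i_b})`.  For `k = p+1 > 2` this is the pointwise
(Nambu-Poisson) decomposability condition. -/
def IsDecomposable (n k : ℕ) (T : (Fin k → Fin n) → ℝ) : Prop :=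
  ∃ e : Fin k → (Fin n → ℝ),
    ∀ v : Fin k → Fin n, T v = Matrix.det (Matrix.of fun a b => e a (v b))

/-- The matrix of `Π Fᵀ : V → V`: `(ΠFᵀ)ⁱⱼ = ∑_{J strictly ordered} Πⁱᴶ F_{jJ}
= (1/p!) ∑_{J any p-tuple} Π^{iJ} F_{jJ}`. -/
noncomputable def contrMatrix (n p : ℕ) (Pi F : (Fin (p + 1) → Fin n) → ℝ) :
    Matrix (Fin n) (Fin n) ℝ :=
  Matrix.of fun i j =>
    (p.factorial : ℝ)⁻¹ * ∑ J : Fin p → Fin n, Pi (Fin.cons i J) * F (Fin.cons j J)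

/-!
Write `Π = e₁ ∧ ⋯ ∧ e_{p+1}`, so that the components of `Π` are maximal minors of the matrix of
the `eₐ`. Expanding `det A • C₀ = A · cramer A C₀` inside `det C` gives the exchange relation
`Π^{iK} Π^{kJ} = ∑_j Π^{(iK)[j ↦ k]} Π^{(iK)_j J}`. Contract it with `F_{kK}`: the term `j = 0`
gives `⟨Π,F⟩ Π^{iJ}`, and each of the other `p` terms becomes `-(ΠFᵀΠ)^{iJ}` once `k` is swapped
with the `j`-th entry of `K`, by antisymmetry of `F`. Hence `(p+1) ΠFᵀΠ = ⟨Π,F⟩ Π`, i.e. `Π` is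
an eigenvector of `1 - ΠFᵀ` with eigenvalue `1 - ⟨Π,F⟩/(p+1)`.
-/

open Matrix in
theorem Matrix.det_mul_det_eq_sum_det_updateCol {n R : Type*} [Fintype n] [DecidableEq n]
    [CommRing R] (A C : Matrix n n R) (k : n) :
    A.det * C.det =
      ∑ j, (A.updateCol j fun a => C a k).det * (C.updateCol k fun a => A a j).det := by
  set x : n → R := fun a => C a k
  have hcol : A *ᵥ cramer A x = ∑ j, cramer A x j • fun a => A a j := by
    ext a; simp [mulVec, dotProduct, mul_comm, Finset.sum_apply]
  have hlin : ∀ v : n → R, (C.updateCol k v).det =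
      detRowAlternating.toMultilinearMap.toLinearMap Cᵀ k v := by
    intro v
    rw [← det_transpose, ← updateRow_transpose]
    rfl
  calc A.det * C.det = (C.updateCol k (A.det • x)).det := by
        rw [det_updateCol_smul, updateCol_eq_self]
    _ = ∑ j, cramer A x j * (C.updateCol k fun a => A a j).det := by
        rw [← mulVec_cramer, hcol, hlin, map_sum]
        simp only [map_smul, hlin, smul_eq_mul]
    _ = _ := by simp only [cramer_apply]

theorem Fin.sum_univ_fun_cons {X M : Type*} [Fintype X] [AddCommMonoid M] {p : ℕ}
    (f : (Fin (p + 1) → X) → M) : ∑ v, f v = ∑ x, ∑ K, f (Fin.cons x K) := by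
  rw [← (Fin.consEquiv fun _ => X).sum_comp, Fintype.sum_prod_type]
  rfl

theorem Fin.tail_comp_swap_zero_succ {α : Type*} {p : ℕ} (v : Fin (p + 1) → α) (c : Fin p) :
    Fin.tail (v ∘ Equiv.swap 0 c.succ) = Function.update (Fin.tail v) c (v 0) := by
  funext d
  by_cases hd : d = c
  · subst hd; simp [Fin.tail]
  · have hswap := Equiv.swap_apply_of_ne_of_ne (Fin.succ_ne_zero d) ((Fin.succ_injective _).ne hd)
    simp [Fin.tail, hswap, hd]

namespace IsDecomposable

variable {n k : ℕ} {T : (Fin k → Fin n) → ℝ}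

theorem mul_eq_sum_mul_update (hT : IsDecomposable n k T) (u w : Fin k → Fin n) (l : Fin k) :
    T u * T w = ∑ j, T (Function.update u j (w l)) * T (Function.update w l (u j)) := by
  obtain ⟨e, he⟩ := hT
  have hupd : ∀ (v : Fin k → Fin n) (j : Fin k) (x : Fin n),
      (Matrix.of fun a b => e a (v b)).updateCol j (fun a => e a x) =
        Matrix.of fun a b => e a (Function.update v j x b) := by
    intro v j x
    ext a b
    by_cases hb : b = j
    · subst hb; simp
    · simp [hb]
  simp only [he, ← hupd]
  exact Matrix.det_mul_det_eq_sum_det_updateCol _ _ l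

end IsDecomposable

namespace IsAltTensor

variable {n k : ℕ} {F : (Fin k → Fin n) → ℝ}

theorem sum_mul_comp_perm (hF : IsAltTensor n k F) (P : (Fin k → Fin n) → ℝ)
    (σ : Equiv.Perm (Fin k)) :
    ∑ v, F v * P (v ∘ σ) = (Equiv.Perm.sign σ : ℝ) * ∑ v, F v * P v := by
  rw [← (σ.arrowCongr (Equiv.refl (Fin n))).sum_comp, Finset.mul_sum]
  refine Fintype.sum_congr _ _ fun v => ?_
  have hv : (σ.arrowCongr (Equiv.refl (Fin n))) v = v ∘ ⇑σ⁻¹ := rfl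
  rw [hv, hF, Function.comp_assoc, Equiv.Perm.inv_def, Equiv.symm_comp_self, Function.comp_id,
    Equiv.Perm.sign_symm]
  ring

end IsAltTensor

theorem IsDecomposable.succ_mul_sum_contract_eq {n p : ℕ} {Pi F : (Fin (p + 1) → Fin n) → ℝ}
    (hPi : IsDecomposable n (p + 1) Pi) (hF : IsAltTensor n (p + 1) F)
    (i : Fin n) (J : Fin p → Fin n) :
    (p + 1 : ℝ) * ∑ v, F v * (Pi (Fin.cons i (Fin.tail v)) * Pi (Fin.cons (v 0) J)) =
      (∑ v, F v * Pi v) * Pi (Fin.cons i J) := by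
  set P : (Fin (p + 1) → Fin n) → ℝ := fun v =>
    Pi (Fin.cons i (Fin.tail v)) * Pi (Fin.cons (v 0) J)
  have hexchange : ∀ v,
      P v = Pi v * Pi (Fin.cons i J) + ∑ c : Fin p, P (v ∘ Equiv.swap 0 c.succ) := by
    intro v
    rw [show P v = _ from hPi.mul_eq_sum_mul_update _ _ 0, Fin.sum_univ_succ]
    congr 1
    · simp [Fin.cons_self_tail]
    · refine Fintype.sum_congr _ _ fun c => ?_
      simp [P, Fin.tail_comp_swap_zero_succ, ← Fin.cons_update, Fin.tail]
  have hswap : ∀ c : Fin p, ∑ v, F v * P (v ∘ Equiv.swap 0 c.succ) = -∑ v, F v * P v := by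
    intro c
    rw [hF.sum_mul_comp_perm, Equiv.Perm.sign_swap (Fin.succ_ne_zero c).symm]
    simp
  have hS : ∑ v, F v * P v = (∑ v, F v * Pi v) * Pi (Fin.cons i J) - p * ∑ v, F v * P v :=
    calc ∑ v, F v * P v
        = ∑ v, (F v * Pi v * Pi (Fin.cons i J) +
            ∑ c : Fin p, F v * P (v ∘ Equiv.swap 0 c.succ)) :=
          Fintype.sum_congr _ _ fun v => by rw [hexchange v, mul_add, Finset.mul_sum, mul_assoc]
      _ = _ := by
          rw [Finset.sum_add_distrib, Finset.sum_comm, ← Finset.sum_mul]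
          simp only [hswap, Finset.sum_const, Finset.card_univ, Fintype.card_fin, nsmul_eq_mul]
          ring
  linear_combination hS

section contrMatrix

variable {n p : ℕ} (Pi F : (Fin (p + 1) → Fin n) → ℝ)

theorem trace_contrMatrix :
    (contrMatrix n p Pi F).trace = (p.factorial : ℝ)⁻¹ * ∑ v, F v * Pi v := by
  rw [Fin.sum_univ_fun_cons, Finset.mul_sum, Matrix.trace]
  refine Fintype.sum_congr _ _ fun k => ?_
  simp only [Matrix.diag_apply, contrMatrix, Matrix.of_apply, mul_comm]

theorem sum_contrMatrix_mul_cons (i : Fin n) (J : Fin p → Fin n) :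
    ∑ k, contrMatrix n p Pi F i k * Pi (Fin.cons k J) =
      (p.factorial : ℝ)⁻¹ * ∑ v, F v * (Pi (Fin.cons i (Fin.tail v)) * Pi (Fin.cons (v 0) J)) := by
  rw [Fin.sum_univ_fun_cons, Finset.mul_sum]
  refine Fintype.sum_congr _ _ fun k => ?_
  simp only [contrMatrix, Matrix.of_apply, Finset.mul_sum, Finset.sum_mul, Fin.tail_cons,
    Fin.cons_zero]
  exact Fintype.sum_congr _ _ fun K => by ring

end contrMatrix

theorem IsDecomposable.sum_contrMatrix_mul_cons_eq_trace_mul {n p : ℕ}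
    {Pi F : (Fin (p + 1) → Fin n) → ℝ}
    (hPi : IsDecomposable n (p + 1) Pi) (hF : IsAltTensor n (p + 1) F)
    (i : Fin n) (J : Fin p → Fin n) :
    ∑ k, contrMatrix n p Pi F i k * Pi (Fin.cons k J) =
      (1 / (p + 1 : ℝ)) * (contrMatrix n p Pi F).trace * Pi (Fin.cons i J) := by
  rw [sum_contrMatrix_mul_cons, trace_contrMatrix, mul_assoc, mul_assoc,
    ← hPi.succ_mul_sum_contract_eq hF i J]
  field_simp

theorem decomposable_gauge_identity_general {n p : ℕ}
    (Pi F : (Fin (p + 1) → Fin n) → ℝ)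
    (hPi : IsDecomposable n (p + 1) Pi) (hF : IsAltTensor n (p + 1) F)
    (hs : 1 - (1 / (p + 1 : ℝ)) * (contrMatrix n p Pi F).trace ≠ 0) :
    ∀ (i : Fin n) (J : Fin p → Fin n),
      (1 - (1 / (p + 1 : ℝ)) * (contrMatrix n p Pi F).trace)⁻¹ *
        ∑ k : Fin n, ((1 : Matrix (Fin n) (Fin n) ℝ) - contrMatrix n p Pi F) i k *
          Pi (Fin.cons k J)
      = Pi (Fin.cons i J) := by
  intro i J
  have hrow : ∑ k, ((1 : Matrix (Fin n) (Fin n) ℝ) - contrMatrix n p Pi F) i k * Pi (Fin.cons k J)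
      = (1 - (1 / (p + 1 : ℝ)) * (contrMatrix n p Pi F).trace) * Pi (Fin.cons i J) := by
    simp only [Matrix.sub_apply, sub_mul, Finset.sum_sub_distrib, Matrix.one_apply, ite_mul,
      one_mul, zero_mul, Finset.sum_ite_eq, Finset.mem_univ, if_true,
      hPi.sum_contrMatrix_mul_cons_eq_trace_mul hF]
  rw [hrow, inv_mul_cancel_left₀ hs]

/-- For `p > 1`, a decomposable (Nambu-Poisson) `(p+1)`-vector `Π` and a `(p+1)`-form `F`,
one has `(1 - ΠFᵀ)(1 - ⟨Π,F⟩/(p+1))⁻¹ Π = Π`, where `⟨Π,F⟩ = Tr(ΠFᵀ)`,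
provided `1 - ⟨Π,F⟩/(p+1) ≠ 0`. -/
theorem decomposable_gauge_identity {n p : ℕ} (hp : 1 < p)
    (Pi F : (Fin (p + 1) → Fin n) → ℝ)
    (hPi : IsDecomposable n (p + 1) Pi) (hF : IsAltTensor n (p + 1) F)
    (hs : 1 - (1 / (p + 1 : ℝ)) * (contrMatrix n p Pi F).trace ≠ 0) :
    ∀ (i : Fin n) (J : Fin p → Fin n),
      (1 - (1 / (p + 1 : ℝ)) * (contrMatrix n p Pi F).trace)⁻¹ *
        ∑ k : Fin n, ((1 : Matrix (Fin n) (Fin n) ℝ) - contrMatrix n p Pi F) i k *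
          Pi (Fin.cons k J)
      = Pi (Fin.cons i J) :=
  decomposable_gauge_identity_general Pi F hPi hF hs
end

section
/- Let p > 1, Π ∈ Λᵖ⁺¹V a decomposable (p+1)-vector and F ∈ Λᵖ⁺¹V* a (p+1)-form on an n-dimensional real vector space V, inducing linear maps Π: ΛᵖV* → V and F: ΛᵖV → V*. Then det(1 - ΠFᵀ) = (1 - (1/(p+1))⟨Π,F⟩)^{p+1}, where ⟨Π,F⟩ = Tr(ΠFᵀ) and the determinant is that of the endomorphism of V. -/
open BigOperators

/-- Full contraction of an array with a family of vectors. -/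
noncomputable def fullContr {n q : ℕ} (F : (Fin q → Fin n) → ℝ) (u : Fin q → Fin n → ℝ) : ℝ :=
  ∑ K : Fin q → Fin n, F K * ∏ d, u d (K d)

lemma fullContr_comp_perm {n q : ℕ} (F : (Fin q → Fin n) → ℝ)
    (hF : ∀ (v : Fin q → Fin n) (σ : Equiv.Perm (Fin q)),
      F (v ∘ σ) = ((Equiv.Perm.sign σ : ℤ) : ℝ) * F v)
    (u : Fin q → Fin n → ℝ) (σ : Equiv.Perm (Fin q)) :
    fullContr F (u ∘ σ) = ((Equiv.Perm.sign σ : ℤ) : ℝ) * fullContr F u := by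
  unfold fullContr
  rw [Finset.mul_sum]
  apply Fintype.sum_equiv (Equiv.arrowCongr σ (Equiv.refl (Fin n)))
  intro K
  have h1 : (Equiv.arrowCongr σ (Equiv.refl (Fin n))) K = K ∘ ⇑(Equiv.symm σ) := rfl
  have h2 : F (K ∘ ⇑(Equiv.symm σ)) = ((Equiv.Perm.sign σ : ℤ) : ℝ) * F K := by
    have : (⇑(Equiv.symm σ) : Fin q → Fin q) = ⇑(σ⁻¹ : Equiv.Perm (Fin q)) := rfl
    rw [this, hF K σ⁻¹, Equiv.Perm.sign_inv]
  have h3 : ∏ d, u d ((K ∘ ⇑(Equiv.symm σ)) d) = ∏ d, (u ∘ ⇑σ) d (K d) := by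
    rw [← Equiv.prod_comp σ (fun d => u d ((K ∘ ⇑(Equiv.symm σ)) d))]
    simp
  rw [h1, h2, h3]
  have h4 : ((Equiv.Perm.sign σ : ℤ) : ℝ) * ((Equiv.Perm.sign σ : ℤ) : ℝ) = 1 := by
    rcases Int.units_eq_one_or (Equiv.Perm.sign σ) with h | h <;> rw [h] <;> norm_num
  rw [← mul_assoc, ← mul_assoc, h4, one_mul]

lemma fullContr_eq_zero {n q : ℕ} (F : (Fin q → Fin n) → ℝ)
    (hF : ∀ (v : Fin q → Fin n) (σ : Equiv.Perm (Fin q)),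
      F (v ∘ σ) = ((Equiv.Perm.sign σ : ℤ) : ℝ) * F v)
    (u : Fin q → Fin n → ℝ) (a b : Fin q) (hab : a ≠ b) (h : u a = u b) :
    fullContr F u = 0 := by
  have h1 : u ∘ (Equiv.swap a b) = u := by
    funext d
    rcases eq_or_ne d a with rfl | hda
    · simp [Equiv.swap_apply_left, h]
    rcases eq_or_ne d b with rfl | hdb
    · simp [Equiv.swap_apply_right, h]
    · simp [Equiv.swap_apply_of_ne_of_ne hda hdb]
  have h2 := fullContr_comp_perm F hF u (Equiv.swap a b)
  rw [h1, Equiv.Perm.sign_swap hab] at h2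
  push_cast at h2
  linarith

lemma sum_det_mul {n p : ℕ} (f : Fin p → Fin n → ℝ) (G : (Fin p → Fin n) → ℝ)
    (hG : ∀ (J : Fin p → Fin n) (σ : Equiv.Perm (Fin p)),
      G (J ∘ σ) = ((Equiv.Perm.sign σ : ℤ) : ℝ) * G J) :
    ∑ J : Fin p → Fin n, (Matrix.of fun a b => f a (J b)).det * G J
      = (p.factorial : ℝ) * ∑ J : Fin p → Fin n, (∏ c, f c (J c)) * G J := by
  simp_rw [Matrix.det_apply, Matrix.of_apply, Finset.sum_mul]
  rw [Finset.sum_comm]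
  have key : ∀ σ : Equiv.Perm (Fin p),
      ∑ J : Fin p → Fin n,
        ((Equiv.Perm.sign σ • ∏ i, f (σ i) (J i)) * G J)
      = ∑ J : Fin p → Fin n, (∏ c, f c (J c)) * G J := by
    intro σ
    apply Fintype.sum_equiv (Equiv.arrowCongr σ (Equiv.refl (Fin n)))
    intro J
    have h1 : (Equiv.arrowCongr σ (Equiv.refl (Fin n))) J = J ∘ ⇑(Equiv.symm σ) := rfl
    have h2 : G (J ∘ ⇑(Equiv.symm σ)) = ((Equiv.Perm.sign σ : ℤ) : ℝ) * G J := by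
      have : (⇑(Equiv.symm σ) : Fin p → Fin p) = ⇑(σ⁻¹ : Equiv.Perm (Fin p)) := rfl
      rw [this, hG J σ⁻¹, Equiv.Perm.sign_inv]
    have h3 : ∏ c, f c ((J ∘ ⇑(Equiv.symm σ)) c) = ∏ i, f (σ i) (J i) := by
      rw [← Equiv.prod_comp σ (fun c => f c ((J ∘ ⇑(Equiv.symm σ)) c))]
      simp
    rw [h1, h2, h3, Units.smul_def, zsmul_eq_mul]
    rcases Int.units_eq_one_or (Equiv.Perm.sign σ) with h | h <;> rw [h] <;> push_cast <;> ring
  rw [Finset.sum_congr rfl (fun σ _ => key σ), Finset.sum_const, Finset.card_univ,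
    Fintype.card_perm, nsmul_eq_mul, Fintype.card_fin]

lemma fullContr_cons {n p : ℕ} (F : (Fin (p + 1) → Fin n) → ℝ) (u0 : Fin n → ℝ)
    (u' : Fin p → Fin n → ℝ) :
    fullContr F (Fin.cons u0 u')
      = ∑ j : Fin n, ∑ J : Fin p → Fin n,
          u0 j * ((∏ c, u' c (J c)) * F (Fin.cons j J)) := by
  unfold fullContr
  rw [← Equiv.sum_comp (Fin.consEquiv fun _ => Fin n)
    (fun K => F K * ∏ d, (Fin.cons u0 u' : Fin (p+1) → Fin n → ℝ) d (K d)),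
    Fintype.sum_prod_type]
  refine Finset.sum_congr rfl fun j _ => Finset.sum_congr rfl fun J _ => ?_
  have h1 : (Fin.consEquiv fun _ => Fin n) (j, J) = Fin.cons j J := rfl
  rw [h1, Fin.prod_univ_succ]
  simp only [Fin.cons_zero, Fin.cons_succ]
  ring

lemma cons_comp_perm {n p : ℕ} (j : Fin n) (J : Fin p → Fin n) (σ : Equiv.Perm (Fin p)) :
    (Fin.cons j J : Fin (p+1) → Fin n) ∘ ⇑(Equiv.Perm.decomposeFin.symm (0, σ))
      = Fin.cons j (J ∘ ⇑σ) := by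
  funext d
  refine Fin.cases ?_ (fun c => ?_) d
  · simp
  · simp [Equiv.Perm.decomposeFin_symm_apply_succ]

/-- For `p > 1`, a decomposable `(p+1)`-vector `Π` and a `(p+1)`-form `F` on an
`n`-dimensional real vector space, `det(1 - ΠFᵀ) = (1 - ⟨Π,F⟩/(p+1))^{p+1}`, where
`⟨Π,F⟩ = Tr(ΠFᵀ)` and the determinant is that of the endomorphism of `V`. -/
theorem det_one_sub_decomposable_contr {n p : ℕ} (hp : 1 < p)
    (Pi F : (Fin (p + 1) → Fin n) → ℝ)
    (hPi : IsDecomposable n (p + 1) Pi) (hF : IsAltTensor n (p + 1) F) :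
    ((1 : Matrix (Fin n) (Fin n) ℝ) - contrMatrix n p Pi F).det =
      (1 - (1 / (p + 1 : ℝ)) * (contrMatrix n p Pi F).trace) ^ (p + 1) := by
  classical
  obtain ⟨e, he⟩ := hPi
  set w : Fin (p + 1) → Fin n → ℝ := fun a j =>
    (-1 : ℝ) ^ (a : ℕ) *
      ∑ J : Fin p → Fin n, (∏ c, e (a.succAbove c) (J c)) * F (Fin.cons j J) with hw
  set lam : ℝ := fullContr F e with hlam
  -- F is alternating in the last p slots
  have hG : ∀ (j : Fin n) (J : Fin p → Fin n) (σ : Equiv.Perm (Fin p)),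
      F (Fin.cons j (J ∘ ⇑σ)) = ((Equiv.Perm.sign σ : ℤ) : ℝ) * F (Fin.cons j J) := by
    intro j J σ
    rw [← cons_comp_perm, hF _ (Equiv.Perm.decomposeFin.symm (0, σ))]
    congr 2
    rw [Equiv.Perm.decomposeFin.symm_sign, if_pos rfl, one_mul]
  have hfac : (p.factorial : ℝ) ≠ 0 := Nat.cast_ne_zero.2 p.factorial_ne_zero
  -- Step A : contrMatrix = Eᵀ * W
  have hM : contrMatrix n p Pi F
      = (Matrix.of e : Matrix (Fin (p+1)) (Fin n) ℝ).transpose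
          * (Matrix.of w : Matrix (Fin (p+1)) (Fin n) ℝ) := by
    ext i j
    rw [contrMatrix, Matrix.mul_apply]
    simp only [Matrix.of_apply, Matrix.transpose_apply]
    have hdet : ∀ J : Fin p → Fin n,
        Pi (Fin.cons i J) = ∑ a : Fin (p + 1),
          (-1 : ℝ) ^ (a : ℕ) * e a i *
            (Matrix.of fun a' b => e (a.succAbove a') (J b)).det := by
      intro J
      rw [he, Matrix.det_succ_column_zero]
      refine Finset.sum_congr rfl fun a _ => ?_
      simp only [Matrix.of_apply, Fin.cons_zero]
      congr 1
    have step1 : ∑ J : Fin p → Fin n, Pi (Fin.cons i J) * F (Fin.cons j J)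
        = ∑ a : Fin (p + 1), (-1 : ℝ) ^ (a : ℕ) * e a i *
            ∑ J : Fin p → Fin n,
              (Matrix.of fun a' b => e (a.succAbove a') (J b)).det * F (Fin.cons j J) := by
      simp_rw [hdet, Finset.sum_mul]
      rw [Finset.sum_comm]
      refine Finset.sum_congr rfl fun a _ => ?_
      rw [Finset.mul_sum]
      refine Finset.sum_congr rfl fun J _ => ?_
      ring
    rw [step1, Finset.mul_sum]
    refine Finset.sum_congr rfl fun a _ => ?_
    rw [sum_det_mul (fun c => e (a.succAbove c)) (fun J => F (Fin.cons j J)) (hG j)]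
    simp only [hw]
    field_simp
  -- Step B : W * Eᵀ = lam • 1
  have hWE : (Matrix.of w : Matrix (Fin (p+1)) (Fin n) ℝ)
      * (Matrix.of e : Matrix (Fin (p+1)) (Fin n) ℝ).transpose
      = lam • (1 : Matrix (Fin (p+1)) (Fin (p+1)) ℝ) := by
    ext a b
    rw [Matrix.mul_apply]
    simp only [Matrix.of_apply, Matrix.transpose_apply]
    have expand : ∑ j, w a j * e b j
        = (-1 : ℝ) ^ (a : ℕ) *
            fullContr F (Fin.cons (e b) (fun c => e (a.succAbove c))) := by
      rw [fullContr_cons, Finset.mul_sum]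
      refine Finset.sum_congr rfl fun j _ => ?_
      simp only [hw, Finset.sum_mul, Finset.mul_sum]
      refine Finset.sum_congr rfl fun J _ => ?_
      ring
    rcases eq_or_ne a b with rfl | hab
    · have hcons : (Fin.cons (e a) (fun c => e (a.succAbove c)) : Fin (p+1) → Fin n → ℝ)
          = e ∘ ⇑(a.cycleRange⁻¹ : Equiv.Perm (Fin (p+1))) := by
        funext d
        refine Fin.cases ?_ (fun c => ?_) d
        · have : (a.cycleRange⁻¹ : Equiv.Perm (Fin (p+1))) 0 = a := Fin.cycleRange_symm_zero a
          simp [this]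
        · have : (a.cycleRange⁻¹ : Equiv.Perm (Fin (p+1))) c.succ = a.succAbove c :=
            Fin.cycleRange_symm_succ a c
          simp [this]
      rw [expand, hcons, fullContr_comp_perm F hF e (a.cycleRange⁻¹)]
      have hsgn : ((Equiv.Perm.sign (a.cycleRange⁻¹ : Equiv.Perm (Fin (p+1))) : ℤ) : ℝ)
          = (-1 : ℝ) ^ (a : ℕ) := by
        rw [Equiv.Perm.sign_inv, Fin.sign_cycleRange]
        push_cast
        ring
      rw [hsgn, Matrix.smul_apply, Matrix.one_apply_eq, smul_eq_mul, mul_one]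
      rw [← mul_assoc, ← pow_add]
      rw [Even.neg_one_pow ⟨(a : ℕ), rfl⟩, one_mul, hlam]
    · obtain ⟨c, hc⟩ := Fin.exists_succAbove_eq (show b ≠ a from hab.symm)
      have hzero : fullContr F (Fin.cons (e b) (fun c => e (a.succAbove c))) = 0 := by
        refine fullContr_eq_zero F hF _ 0 c.succ (Fin.succ_ne_zero c).symm ?_
        simp [Fin.cons_zero, Fin.cons_succ, hc]
      rw [expand, hzero, mul_zero, Matrix.smul_apply, Matrix.one_apply_ne hab,
        smul_eq_mul, mul_zero]
  -- Step C : trace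
  have htr : (contrMatrix n p Pi F).trace = ((p : ℝ) + 1) * lam := by
    rw [hM, Matrix.trace_mul_comm, hWE, Matrix.trace_smul, Matrix.trace_one]
    simp [Fintype.card_fin]
    ring
  have hp1 : ((p : ℝ) + 1) ≠ 0 := by positivity
  -- Step D : determinant
  rw [htr, hM, Matrix.det_one_sub_mul_comm, hWE]
  have h1 : (1 : Matrix (Fin (p+1)) (Fin (p+1)) ℝ) - lam • 1 = (1 - lam) • 1 := by
    rw [sub_smul, one_smul]
  rw [h1, Matrix.det_smul, Matrix.det_one, Fintype.card_fin, mul_one]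
  congr 1
  field_simp
end

section
/- Let Π♯: ΛᵖT*M → TM be a vector bundle morphism whose graph G_Π = {Π♯(ξ) + ξ : ξ ∈ Ωᵖ(M)} ⊂ TM ⊕ ΛᵖT*M is closed under the higher Dorfman bracket [V+ξ, W+η]_D = [V,W] + L_V η - i_W dξ. Then the (p+1)-tensor Π defined by Π(α, ξ) = ⟨α, Π♯(ξ)⟩ is totally antisymmetric, i.e., a (p+1)-vector field. -/
open BigOperators

noncomputable section

/-- Partial derivative `∂_m f` on `ℝⁿ`. -/
def pderiv' (n : ℕ) (f : (Fin n → ℝ) → ℝ) (m : Fin n) (x : Fin n → ℝ) : ℝ :=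
  fderiv ℝ f x (Pi.single m 1)

/-- Lie bracket of vector fields on `ℝⁿ`, in components. -/
def lieBracketVF (n : ℕ) (X Y : (Fin n → ℝ) → Fin n → ℝ) (x : Fin n → ℝ) (i : Fin n) : ℝ :=
  ∑ m : Fin n, (X x m * pderiv' n (fun y => Y y i) m x - Y x m * pderiv' n (fun y => X y i) m x)

/-- Exterior derivative of a `k`-form (given in components), in components. -/
def extDerivForm (n k : ℕ) (ξ : (Fin n → ℝ) → (Fin k → Fin n) → ℝ)
    (x : Fin n → ℝ) (v : Fin (k + 1) → Fin n) : ℝ :=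
  ∑ r : Fin (k + 1), (-1 : ℝ) ^ (r : ℕ) * pderiv' n (fun y => ξ y (r.removeNth v)) (v r) x

/-- Lie derivative of a `p`-form along a vector field, in components:
`(L_X η)_J = X^m ∂_m η_J + ∑_r (∂_{j_r} X^m) η_{j₁…m…j_p}`. -/
def lieDerivForm (n p : ℕ) (X : (Fin n → ℝ) → Fin n → ℝ)
    (η : (Fin n → ℝ) → (Fin p → Fin n) → ℝ) (x : Fin n → ℝ) (J : Fin p → Fin n) : ℝ :=
  ∑ m : Fin n, X x m * pderiv' n (fun y => η y J) m x
    + ∑ r : Fin p, ∑ m : Fin n, pderiv' n (fun y => X y m) (J r) x * η x (Function.update J r m)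

/-- The vector field `Π♯(ξ)` associated to a bundle map `Π : Λᵖ T*ℝⁿ → Tℝⁿ` with components
`Π^{iJ}` (antisymmetric in `J`) and a `p`-form `ξ`:
`(Π♯ξ)^i = ∑_{J ordered} Π^{iJ} ξ_J = (1/p!) ∑_{J any tuple} Π^{iJ} ξ_J`. -/
def sharpMap (n p : ℕ) (Pi : (Fin n → ℝ) → Fin n → (Fin p → Fin n) → ℝ)
    (ξ : (Fin n → ℝ) → (Fin p → Fin n) → ℝ) (x : Fin n → ℝ) (i : Fin n) : ℝ :=
  (p.factorial : ℝ)⁻¹ * ∑ J : Fin p → Fin n, Pi x i J * ξ x J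

namespace DorfmanAux
open Finset

lemma pderiv'_of_hasFDerivAt {n : ℕ} {f : (Fin n → ℝ) → ℝ} {L : (Fin n → ℝ) →L[ℝ] ℝ}
    {x : Fin n → ℝ} (h : HasFDerivAt f L x) (m : Fin n) :
    pderiv' n f m x = L (Pi.single m 1) := by
  rw [pderiv', h.fderiv]

lemma pderiv'_const {n : ℕ} (c : ℝ) (m : Fin n) (x : Fin n → ℝ) :
    pderiv' n (fun _ => c) m x = 0 := by
  rw [pderiv'_of_hasFDerivAt (hasFDerivAt_const c x) m]; rfl

lemma hasFDerivAt_coordSub {n : ℕ} (s : Fin n) (x : Fin n → ℝ) (c : ℝ) :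
    HasFDerivAt (fun y : Fin n → ℝ => y s - c)
      (ContinuousLinearMap.proj (R := ℝ) (φ := fun _ : Fin n => ℝ) s) x :=
  ((ContinuousLinearMap.proj (R := ℝ) (φ := fun _ : Fin n => ℝ) s).hasFDerivAt).sub_const c

lemma contDiff_coordSub {n : ℕ} (s : Fin n) (c : ℝ) :
    ContDiff ℝ (⊤ : ℕ∞) (fun y : Fin n → ℝ => y s - c) :=
  ((ContinuousLinearMap.proj (R := ℝ) (φ := fun _ : Fin n => ℝ) s).contDiff).sub contDiff_const

lemma insertNth_eq_cons_comp {β : Type*} {q : ℕ} (r : Fin (q + 1)) (m : β) (R : Fin q → β) :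
    r.insertNth m R = (Fin.cons m R) ∘ r.cycleRange := by
  funext k
  refine Fin.succAboveCases r ?_ ?_ k
  · simp [Fin.insertNth_apply_same, Fin.cycleRange_self]
  · intro j
    simp [Fin.insertNth_apply_succAbove, Fin.cycleRange_succAbove]

lemma removeNth_succ_cons {β : Type*} {q : ℕ} (r : Fin (q + 1)) (m : β) (J : Fin (q + 1) → β) :
    Fin.removeNth (α := fun _ => β) r.succ (Fin.cons m J)
      = Fin.cons m (Fin.removeNth (α := fun _ => β) r J) := by
  funext j
  refine Fin.cases ?_ ?_ j
  · simp [Fin.removeNth]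
  · intro j'
    simp [Fin.removeNth, Fin.succ_succAbove_succ]

lemma alt_update {n q : ℕ} (A : (Fin (q + 1) → Fin n) → ℝ)
    (hA : ∀ (J : Fin (q + 1) → Fin n) (σ : Equiv.Perm (Fin (q + 1))),
      A (J ∘ σ) = ((Equiv.Perm.sign σ : ℤ) : ℝ) * A J)
    (J : Fin (q + 1) → Fin n) (r : Fin (q + 1)) (m : Fin n) :
    A (Function.update J r m) = (-1 : ℝ) ^ (r : ℕ) * A (Fin.cons m (r.removeNth J)) := by
  have h1 : Function.update J r m = (Fin.cons m (r.removeNth J)) ∘ r.cycleRange := by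
    rw [← Fin.insertNth_removeNth, insertNth_eq_cons_comp]
  rw [h1, hA, Fin.sign_cycleRange]
  norm_num

def gvec (α : Fin n → ℝ) (K : Fin q → Fin n) : Fin (q + 1) → Fin n → ℝ :=
  Fin.cons α (fun j t => if t = K j then (1 : ℝ) else 0)

def Amat (α : Fin n → ℝ) (K : Fin q → Fin n) (J : Fin (q + 1) → Fin n) :
    Matrix (Fin (q + 1)) (Fin (q + 1)) ℝ :=
  Matrix.of fun r c => gvec α K c (J r)

def Aform (α : Fin n → ℝ) (K : Fin q → Fin n) (J : Fin (q + 1) → Fin n) : ℝ :=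
  (Amat α K J).det

lemma Aform_alt (α : Fin n → ℝ) (K : Fin q → Fin n) (J : Fin (q + 1) → Fin n)
    (σ : Equiv.Perm (Fin (q + 1))) :
    Aform α K (J ∘ σ) = ((Equiv.Perm.sign σ : ℤ) : ℝ) * Aform α K J := by
  have h : Amat α K (J ∘ σ) = (Amat α K J).submatrix σ id := rfl
  rw [Aform, h, Matrix.det_permute]
  rfl

lemma Amat_update (α : Fin n → ℝ) (K : Fin q → Fin n) (J : Fin (q + 1) → Fin n)
    (r : Fin (q + 1)) (m : Fin n) :
    Amat α K (Function.update J r m) = (Amat α K J).updateRow r (fun c => gvec α K c m) := by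
  ext r' c
  by_cases h : r' = r
  · subst h; simp [Amat, Matrix.updateRow_apply, Function.update_apply]
  · simp [Amat, Matrix.updateRow_apply, Function.update_apply, h]

lemma det_updateRow_eq (M : Matrix (Fin (q + 1)) (Fin (q + 1)) ℝ) (r : Fin (q + 1))
    (w : Fin (q + 1) → ℝ) :
    (M.updateRow r w).det = Matrix.detRowAlternating (Function.update M r w) := rfl

lemma key_identity (α : Fin n → ℝ) (K : Fin q → Fin n) (B : Fin n → ℝ)
    (J : Fin (q + 1) → Fin n) :
    ∑ r : Fin (q + 1), α (J r) * ∑ m : Fin n, B m * Aform α K (Function.update J r m)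
      = (∑ t : Fin n, α t * B t) * Aform α K J := by
  set M := Amat α K J with hM
  set wB : Fin (q + 1) → ℝ := fun c => ∑ m : Fin n, B m * gvec α K c m with hwB
  have step1 : ∀ r : Fin (q + 1),
      ∑ m : Fin n, B m * Aform α K (Function.update J r m) = (M.updateRow r wB).det := by
    intro r
    have : ∀ m : Fin n, B m * Aform α K (Function.update J r m)
        = Matrix.detRowAlternating (Function.update M r (B m • fun c => gvec α K c m)) := by
      intro m
      erw [Aform, Amat_update, det_updateRow_eq,
        (Matrix.detRowAlternating (R := ℝ) (n := Fin (q+1))).map_update_smul, smul_eq_mul]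
    rw [Finset.sum_congr rfl fun m _ => this m]
    erw [← (Matrix.detRowAlternating (R := ℝ) (n := Fin (q+1))).map_update_sum]
    have hw2 : (∑ a : Fin n, B a • fun c => gvec α K c a) = wB := by
      funext c; simp [hwB, Finset.sum_apply, mul_comm]
    rw [hw2, det_updateRow_eq]
  have step2 : ∀ r : Fin (q + 1),
      (M.updateRow r wB).det = ∑ c : Fin (q + 1), wB c * M.adjugate c r := by
    intro r
    have hw : wB = ∑ c : Fin (q + 1), wB c • (Pi.single c 1 : Fin (q+1) → ℝ) := by
      funext c'
      simp [Finset.sum_apply, Pi.single_apply]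
    calc (M.updateRow r wB).det
        = Matrix.detRowAlternating (Function.update M r (∑ c : Fin (q+1), wB c • (Pi.single c 1 : Fin (q+1) → ℝ))) := by
          rw [det_updateRow_eq, ← hw]
      _ = ∑ c : Fin (q + 1), wB c * M.adjugate c r := by
          erw [(Matrix.detRowAlternating (R := ℝ) (n := Fin (q+1))).map_update_sum]
          refine Finset.sum_congr rfl fun c _ => ?_
          erw [(Matrix.detRowAlternating (R := ℝ) (n := Fin (q+1))).map_update_smul, smul_eq_mul]
          rw [Matrix.adjugate_apply, det_updateRow_eq]
  have hM0 : ∀ r : Fin (q + 1), α (J r) = M r 0 := by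
    intro r; simp [hM, Amat, gvec]
  calc ∑ r : Fin (q + 1), α (J r) * ∑ m : Fin n, B m * Aform α K (Function.update J r m)
      = ∑ r : Fin (q + 1), ∑ c : Fin (q + 1), wB c * M.adjugate c r * M r 0 := by
        refine Finset.sum_congr rfl fun r _ => ?_
        rw [step1, step2, hM0 r, Finset.mul_sum]
        exact Finset.sum_congr rfl fun c _ => by ring
    _ = ∑ c : Fin (q + 1), wB c * ((M.adjugate * M) c 0) := by
        rw [Finset.sum_comm]
        refine Finset.sum_congr rfl fun c _ => ?_
        rw [Matrix.mul_apply, Finset.mul_sum]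
        exact Finset.sum_congr rfl fun r _ => by ring
    _ = (∑ t : Fin n, α t * B t) * Aform α K J := by
        rw [Matrix.adjugate_mul]
        have h1 : ∀ c : Fin (q+1), (M.det • (1 : Matrix (Fin (q+1)) (Fin (q+1)) ℝ)) c 0
            = M.det * (if c = 0 then 1 else 0) := by
          intro c; simp [Matrix.one_apply]
        rw [Finset.sum_congr rfl fun c _ => by rw [h1]]
        simp only [mul_ite, mul_one, mul_zero]
        rw [Finset.sum_ite_eq' Finset.univ (0 : Fin (q+1)) (fun c => wB c * M.det)]
        simp only [Finset.mem_univ, if_true]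
        have : wB 0 = ∑ t : Fin n, α t * B t := by
          simp [hwB, gvec, mul_comm]
        rw [this, Aform]


lemma sharp_Aform (T : Fin n → (Fin (q + 1) → Fin n) → ℝ)
    (hT : ∀ (i : Fin n) (J : Fin (q + 1) → Fin n) (σ : Equiv.Perm (Fin (q + 1))),
      T i (J ∘ σ) = ((Equiv.Perm.sign σ : ℤ) : ℝ) * T i J)
    (α : Fin n → ℝ) (K : Fin q → Fin n) (i : Fin n) :
    ∑ J : Fin (q + 1) → Fin n, T i J * Aform α K J
      = ((q + 1).factorial : ℝ) * ∑ t : Fin n, α t * T i (Fin.cons t K) := by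
  have hdet : ∀ J : Fin (q + 1) → Fin n,
      Aform α K J = ∑ σ : Equiv.Perm (Fin (q + 1)),
        ((Equiv.Perm.sign σ : ℤ) : ℝ) * ∏ c : Fin (q + 1), gvec α K c (J (σ c)) := by
    intro J
    rw [Aform, Matrix.det_apply]
    refine Finset.sum_congr rfl fun σ _ => ?_
    rw [Units.smul_def, zsmul_eq_mul]
    push_cast
    rfl
  -- base sum
  set S0 : ℝ := ∑ J : Fin (q + 1) → Fin n, T i J * ∏ c : Fin (q + 1), gvec α K c (J c) with hS0
  have hinner : ∀ σ : Equiv.Perm (Fin (q + 1)),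
      ∑ J : Fin (q + 1) → Fin n,
        T i J * (((Equiv.Perm.sign σ : ℤ) : ℝ) * ∏ c : Fin (q + 1), gvec α K c (J (σ c))) = S0 := by
    intro σ
    have hbij : Function.Bijective (fun J : Fin (q + 1) → Fin n => J ∘ ⇑σ) := by
      constructor
      · intro a b h
        funext k
        have := congrFun h (σ⁻¹ k)
        simpa using this
      · intro b
        exact ⟨b ∘ ⇑σ⁻¹, by funext k; simp⟩
    have hre : ∑ J : Fin (q + 1) → Fin n,
        T i J * (((Equiv.Perm.sign σ : ℤ) : ℝ) * ∏ c : Fin (q + 1), gvec α K c (J (σ c)))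
        = ∑ J : Fin (q + 1) → Fin n,
          T i (J ∘ ⇑σ⁻¹) * (((Equiv.Perm.sign σ : ℤ) : ℝ)
            * ∏ c : Fin (q + 1), gvec α K c (J c)) := by
      apply Fintype.sum_bijective (fun J : Fin (q + 1) → Fin n => J ∘ ⇑σ) hbij
      intro J
      have hJ : (J ∘ ⇑σ) ∘ ⇑σ⁻¹ = J := by funext k; simp
      show _ = T i ((J ∘ ⇑σ) ∘ ⇑σ⁻¹) * (((Equiv.Perm.sign σ : ℤ) : ℝ)
            * ∏ c : Fin (q + 1), gvec α K c ((J ∘ ⇑σ) c))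
      rw [hJ]
      rfl
    rw [hre]
    have hsgn : ∀ J : Fin (q + 1) → Fin n, T i (J ∘ ⇑σ⁻¹)
        = ((Equiv.Perm.sign σ : ℤ) : ℝ) * T i J := by
      intro J; rw [hT i J σ⁻¹, Equiv.Perm.sign_inv]
    rcases Int.units_eq_one_or (Equiv.Perm.sign σ) with hs | hs
    · refine Finset.sum_congr rfl fun J _ => ?_
      rw [hsgn, hs]
      push_cast; ring
    · refine Finset.sum_congr rfl fun J _ => ?_
      rw [hsgn, hs]
      push_cast; ring
  have hswap : ∑ J : Fin (q + 1) → Fin n, T i J * Aform α K J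
      = ∑ σ : Equiv.Perm (Fin (q + 1)), S0 := by
    rw [Finset.sum_congr rfl fun J _ => by rw [hdet J, Finset.mul_sum]]
    rw [Finset.sum_comm]
    exact Finset.sum_congr rfl fun σ _ => hinner σ
  rw [hswap, Finset.sum_const, Finset.card_univ, Fintype.card_perm, Fintype.card_fin,
    nsmul_eq_mul]
  congr 1
  -- now compute S0
  have hprod : ∀ J : Fin (q + 1) → Fin n,
      ∏ c : Fin (q + 1), gvec α K c (J c)
        = α (J 0) * (if Fin.tail J = K then (1 : ℝ) else 0) := by
    intro J
    rw [Fin.prod_univ_succ]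
    have h0 : gvec α K 0 (J 0) = α (J 0) := by simp [gvec]
    have hsucc : ∀ j : Fin q, gvec α K j.succ (J j.succ)
        = if J j.succ = K j then (1 : ℝ) else 0 := by
      intro j; simp [gvec]
    rw [h0, Finset.prod_congr rfl fun j _ => hsucc j, Finset.prod_boole]
    congr 1
    by_cases h : Fin.tail J = K
    · have hall : ∀ i ∈ Finset.univ, J i.succ = K i := fun j _ => congrFun h j
      rw [if_pos hall, if_pos h]
    · rw [if_neg, if_neg h]
      intro hc
      exact h (funext fun j => hc j (Finset.mem_univ j))
  have hsplit : S0 = ∑ tT : Fin n × (Fin q → Fin n),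
      T i (Fin.cons tT.1 tT.2) * (α tT.1 * (if tT.2 = K then (1:ℝ) else 0)) := by
    rw [hS0]
    rw [Finset.sum_congr rfl fun J _ => by rw [hprod J]]
    refine (Fintype.sum_equiv (Fin.consEquiv (fun _ : Fin (q+1) => Fin n))
      (fun tT => T i (Fin.cons tT.1 tT.2) * (α tT.1 * (if tT.2 = K then (1:ℝ) else 0)))
      (fun J => T i J * (α (J 0) * (if Fin.tail J = K then (1:ℝ) else 0))) ?_).symm
    intro tT
    simp [Fin.consEquiv, Fin.tail_cons]
  rw [hsplit, Fintype.sum_prod_type]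
  refine Finset.sum_congr rfl fun t _ => ?_
  simp only [mul_ite, mul_one, mul_zero]
  rw [Finset.sum_ite_eq' Finset.univ K (fun T2 => T i (Fin.cons t T2) * α t)]
  simp [mul_comm]


lemma core {n q : ℕ}
    (Pi : (Fin n → ℝ) → Fin n → (Fin (q + 1) → Fin n) → ℝ)
    (hPismooth : ∀ (i : Fin n) (J : Fin (q + 1) → Fin n), ContDiff ℝ (⊤ : ℕ∞) fun x => Pi x i J)
    (hclosed : ∀ ξ η : (Fin n → ℝ) → (Fin (q + 1) → Fin n) → ℝ,
      (∀ J, ContDiff ℝ (⊤ : ℕ∞) fun x => ξ x J) → (∀ J, ContDiff ℝ (⊤ : ℕ∞) fun x => η x J) →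
      (∀ x J (σ : Equiv.Perm (Fin (q + 1))), ξ x (J ∘ σ) = ((Equiv.Perm.sign σ : ℤ) : ℝ) * ξ x J) →
      (∀ x J (σ : Equiv.Perm (Fin (q + 1))), η x (J ∘ σ) = ((Equiv.Perm.sign σ : ℤ) : ℝ) * η x J) →
      ∀ (x : Fin n → ℝ) (i : Fin n),
        lieBracketVF n (sharpMap n (q + 1) Pi ξ) (sharpMap n (q + 1) Pi η) x i =
          sharpMap n (q + 1) Pi
            (fun y J => lieDerivForm n (q + 1) (sharpMap n (q + 1) Pi ξ) η y J -
              ∑ m : Fin n, sharpMap n (q + 1) Pi η y m * extDerivForm n (q + 1) ξ y (Fin.cons m J)) x i)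
    (A : (Fin (q + 1) → Fin n) → ℝ)
    (hAalt : ∀ (J : Fin (q + 1) → Fin n) (σ : Equiv.Perm (Fin (q + 1))),
      A (J ∘ σ) = ((Equiv.Perm.sign σ : ℤ) : ℝ) * A J)
    (x : Fin n → ℝ) (s i : Fin n) :
    ∑ J : Fin (q + 1) → Fin n, Pi x i J *
      ∑ r : Fin (q + 1), (if s = J r then (1 : ℝ) else 0) *
        ∑ m : Fin n, sharpMap n (q + 1) Pi (fun _ J' => A J') x m * A (Function.update J r m)
      = 0 := by
  classical
  set η : (Fin n → ℝ) → (Fin (q + 1) → Fin n) → ℝ := fun _ J' => A J' with hηdef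
  set ξ : (Fin n → ℝ) → (Fin (q + 1) → Fin n) → ℝ := fun y J' => A J' * (y s - x s) with hξdef
  set W : (Fin n → ℝ) → Fin n → ℝ := sharpMap n (q + 1) Pi η with hWdef
  -- hypotheses of hclosed
  have hξs : ∀ J, ContDiff ℝ (⊤ : ℕ∞) fun y => ξ y J := fun J => contDiff_const.mul (contDiff_coordSub s (x s))
  have hηs : ∀ J, ContDiff ℝ (⊤ : ℕ∞) fun y => η y J := fun J => contDiff_const
  have hξa : ∀ y J (σ : Equiv.Perm (Fin (q + 1))),
      ξ y (J ∘ σ) = ((Equiv.Perm.sign σ : ℤ) : ℝ) * ξ y J := by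
    intro y J σ; simp only [hξdef]; rw [hAalt]; ring
  have hηa : ∀ y J (σ : Equiv.Perm (Fin (q + 1))),
      η y (J ∘ σ) = ((Equiv.Perm.sign σ : ℤ) : ℝ) * η y J := by
    intro y J σ; simp only [hηdef]; rw [hAalt]
  have H := hclosed ξ η hξs hηs hξa hηa x i
  -- basic facts
  have hXW : ∀ (y : Fin n → ℝ) (j : Fin n),
      sharpMap n (q + 1) Pi ξ y j = W y j * (y s - x s) := by
    intro y j
    simp only [hWdef, sharpMap, hξdef, hηdef]
    rw [Finset.sum_congr rfl fun J _ => (mul_assoc (Pi y j J) (A J) (y s - x s)).symm,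
      ← Finset.sum_mul, ← mul_assoc]
  have hX0 : ∀ j : Fin n, sharpMap n (q + 1) Pi ξ x j = 0 := by
    intro j; rw [hXW]; simp
  have hdiffW : ∀ j : Fin n, DifferentiableAt ℝ (fun y => W y j) x := by
    intro j
    simp only [hWdef, sharpMap, hηdef]
    exact DifferentiableAt.const_mul
      (DifferentiableAt.fun_sum fun J _ =>
        DifferentiableAt.mul_const ((hPismooth j J).differentiable (by simp) x) (A J)) _
  have hpdX : ∀ (j k : Fin n),
      pderiv' n (fun y => sharpMap n (q + 1) Pi ξ y j) k x
        = W x j * (if s = k then 1 else 0) := by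
    intro j k
    have hfun : (fun y => sharpMap n (q + 1) Pi ξ y j) = fun y => W y j * (y s - x s) :=
      funext fun y => hXW y j
    rw [hfun]
    have h2 := ((hdiffW j).hasFDerivAt).mul (hasFDerivAt_coordSub s x (x s))
    rw [pderiv'_of_hasFDerivAt (f := fun y => W y j * (y s - x s)) h2 k]
    rw [ContinuousLinearMap.add_apply, ContinuousLinearMap.smul_apply,
      ContinuousLinearMap.smul_apply, ContinuousLinearMap.proj_apply, sub_self, zero_smul,
      add_zero, smul_eq_mul, _root_.Pi.single_apply]
  -- LHS
  have hLHS : lieBracketVF n (sharpMap n (q + 1) Pi ξ) (sharpMap n (q + 1) Pi η) x i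
      = -(W x s * W x i) := by
    unfold lieBracketVF
    have hterm : ∀ k : Fin n,
        sharpMap n (q + 1) Pi ξ x k * pderiv' n (fun y => sharpMap n (q + 1) Pi η y i) k x
          - sharpMap n (q + 1) Pi η x k * pderiv' n (fun y => sharpMap n (q + 1) Pi ξ y i) k x
        = -(if s = k then W x k * W x i else 0) := by
      intro k
      rw [hX0 k, zero_mul, hpdX i k]
      show (0 : ℝ) - W x k * (W x i * (if s = k then 1 else 0)) = _
      split_ifs <;> ring
    rw [Finset.sum_congr rfl fun k _ => hterm k, Finset.sum_neg_distrib,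
      Finset.sum_ite_eq Finset.univ s (fun k => W x k * W x i)]
    simp
  -- derivative of ξ components
  have hpdXi : ∀ (J' : Fin (q + 1) → Fin n) (k : Fin n),
      pderiv' n (fun y => ξ y J') k x = A J' * (if s = k then 1 else 0) := by
    intro J' k
    have h2 : HasFDerivAt (fun y => ξ y J')
        (A J' • ContinuousLinearMap.proj (R := ℝ) (φ := fun _ : Fin n => ℝ) s) x :=
      (hasFDerivAt_coordSub s x (x s)).const_mul (A J')
    rw [pderiv'_of_hasFDerivAt h2 k]
    rw [ContinuousLinearMap.smul_apply, ContinuousLinearMap.proj_apply, smul_eq_mul,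
      _root_.Pi.single_apply]
  -- Lie derivative term
  have hlie : ∀ J : Fin (q + 1) → Fin n,
      lieDerivForm n (q + 1) (sharpMap n (q + 1) Pi ξ) η x J
        = ∑ r : Fin (q + 1), (if s = J r then (1 : ℝ) else 0) *
            ∑ m : Fin n, W x m * A (Function.update J r m) := by
    intro J
    unfold lieDerivForm
    have h1 : ∑ m : Fin n, sharpMap n (q + 1) Pi ξ x m
        * pderiv' n (fun y => η y J) m x = 0 := by
      simp only [hηdef]
      rw [Finset.sum_congr rfl fun m _ => by rw [pderiv'_const (A J) m x, mul_zero]]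
      exact Finset.sum_const_zero
    rw [h1, zero_add]
    refine Finset.sum_congr rfl fun r _ => ?_
    rw [Finset.mul_sum]
    refine Finset.sum_congr rfl fun m _ => ?_
    rw [hpdX m (J r)]
    show W x m * (if s = J r then 1 else 0) * A (Function.update J r m) = _
    ring
  -- exterior derivative term
  have hext : ∀ (m : Fin n) (J : Fin (q + 1) → Fin n),
      extDerivForm n (q + 1) ξ x (Fin.cons m J)
        = (if s = m then (1 : ℝ) else 0) * A J
          + ∑ r : Fin (q + 1), (-1 : ℝ) ^ ((r : ℕ) + 1) *
              ((if s = J r then (1 : ℝ) else 0) * A (Fin.cons m (Fin.removeNth r J))) := by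
    intro m J
    unfold extDerivForm
    rw [Fin.sum_univ_succ]
    congr 1
    · simp only [Fin.removeNth_zero, Fin.tail_cons, Fin.cons_zero, Fin.val_zero, pow_zero, one_mul]
      rw [hpdXi J m]
      ring
    · refine Finset.sum_congr rfl fun r _ => ?_
      rw [removeNth_succ_cons]
      simp only [Fin.cons_succ, Fin.val_succ]
      rw [hpdXi (Fin.cons m (Fin.removeNth r J)) (J r)]
      ring
  -- RHS
  have hRHS : sharpMap n (q + 1) Pi
      (fun y J => lieDerivForm n (q + 1) (sharpMap n (q + 1) Pi ξ) η y J -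
        ∑ m : Fin n, sharpMap n (q + 1) Pi η y m * extDerivForm n (q + 1) ξ y (Fin.cons m J)) x i
      = ((q + 1).factorial : ℝ)⁻¹ * ∑ J : Fin (q + 1) → Fin n, Pi x i J *
          ((∑ r : Fin (q + 1), (if s = J r then (1 : ℝ) else 0) *
            ∑ m : Fin n, W x m * A (Function.update J r m))
           - (W x s * A J
              + ∑ m : Fin n, W x m * ∑ r : Fin (q + 1), (-1 : ℝ) ^ ((r : ℕ) + 1) *
                  ((if s = J r then (1 : ℝ) else 0) * A (Fin.cons m (Fin.removeNth r J))))) := by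
    unfold sharpMap
    congr 1
    refine Finset.sum_congr rfl fun J _ => ?_
    congr 1
    show lieDerivForm n (q + 1) (sharpMap n (q + 1) Pi ξ) η x J -
        (∑ m : Fin n, sharpMap n (q + 1) Pi η x m * extDerivForm n (q + 1) ξ x (Fin.cons m J)) = _
    rw [hlie J]
    congr 1
    have hsum : ∀ m : Fin n, sharpMap n (q + 1) Pi η x m
        * extDerivForm n (q + 1) ξ x (Fin.cons m J)
        = (if s = m then W x m * A J else 0)
          + W x m * ∑ r : Fin (q + 1), (-1 : ℝ) ^ ((r : ℕ) + 1) *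
              ((if s = J r then (1 : ℝ) else 0) * A (Fin.cons m (Fin.removeNth r J))) := by
      intro m
      rw [hext m J]
      show W x m * _ = _
      rw [mul_add]
      congr 1
      split_ifs <;> ring
    rw [Finset.sum_congr rfl fun m _ => hsum m, Finset.sum_add_distrib,
      Finset.sum_ite_eq Finset.univ s (fun m => W x m * A J)]
    simp
  -- combine
  have hc : ((q + 1).factorial : ℝ) ≠ 0 := Nat.cast_ne_zero.mpr (Nat.factorial_ne_zero _)
  -- rewrite the (-1)^(r+1) sum via alt_update
  have hT3 : ∀ J : Fin (q + 1) → Fin n,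
      ∑ m : Fin n, W x m * ∑ r : Fin (q + 1), (-1 : ℝ) ^ ((r : ℕ) + 1) *
          ((if s = J r then (1 : ℝ) else 0) * A (Fin.cons m (Fin.removeNth r J)))
      = -(∑ r : Fin (q + 1), (if s = J r then (1 : ℝ) else 0) *
            ∑ m : Fin n, W x m * A (Function.update J r m)) := by
    intro J
    have hterm : ∀ (m : Fin n) (r : Fin (q + 1)),
        (-1 : ℝ) ^ ((r : ℕ) + 1) * ((if s = J r then (1 : ℝ) else 0)
          * A (Fin.cons m (Fin.removeNth r J)))
        = -((if s = J r then (1 : ℝ) else 0) * A (Function.update J r m)) := by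
      intro m r
      rw [alt_update A hAalt J r m, pow_succ]
      have hsq : ((-1 : ℝ) ^ (r : ℕ)) * ((-1 : ℝ) ^ (r : ℕ)) = 1 := by
        rw [← pow_add, Even.neg_one_pow (Even.add_self _)]
      nlinarith [hsq]
    calc ∑ m : Fin n, W x m * ∑ r : Fin (q + 1), (-1 : ℝ) ^ ((r : ℕ) + 1) *
            ((if s = J r then (1 : ℝ) else 0) * A (Fin.cons m (Fin.removeNth r J)))
        = ∑ m : Fin n, ∑ r : Fin (q + 1),
            W x m * -((if s = J r then (1 : ℝ) else 0) * A (Function.update J r m)) := by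
          refine Finset.sum_congr rfl fun m _ => ?_
          rw [Finset.mul_sum]
          exact Finset.sum_congr rfl fun r _ => by rw [hterm m r]
      _ = ∑ r : Fin (q + 1), ∑ m : Fin n,
            W x m * -((if s = J r then (1 : ℝ) else 0) * A (Function.update J r m)) :=
          Finset.sum_comm
      _ = -(∑ r : Fin (q + 1), (if s = J r then (1 : ℝ) else 0) *
            ∑ m : Fin n, W x m * A (Function.update J r m)) := by
          rw [← Finset.sum_neg_distrib]
          refine Finset.sum_congr rfl fun r _ => ?_
          rw [Finset.mul_sum, ← Finset.sum_neg_distrib]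
          exact Finset.sum_congr rfl fun m _ => by ring
  -- final combination
  rw [hLHS, hRHS] at H
  have hinner : ∀ J : Fin (q + 1) → Fin n,
      Pi x i J * ((∑ r : Fin (q + 1), (if s = J r then (1 : ℝ) else 0) *
            ∑ m : Fin n, W x m * A (Function.update J r m))
          - (W x s * A J + ∑ m : Fin n, W x m * ∑ r : Fin (q + 1), (-1 : ℝ) ^ ((r : ℕ) + 1) *
              ((if s = J r then (1 : ℝ) else 0) * A (Fin.cons m (Fin.removeNth r J)))))
      = 2 * (Pi x i J * (∑ r : Fin (q + 1), (if s = J r then (1 : ℝ) else 0) *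
            ∑ m : Fin n, W x m * A (Function.update J r m))) - W x s * (Pi x i J * A J) := by
    intro J
    rw [hT3 J]
    ring
  rw [Finset.sum_congr rfl fun J _ => hinner J, Finset.sum_sub_distrib,
    ← Finset.mul_sum, ← Finset.mul_sum] at H
  have hWi : W x i = ((q + 1).factorial : ℝ)⁻¹ *
      ∑ J : Fin (q + 1) → Fin n, Pi x i J * A J := rfl
  set S1 := ∑ J : Fin (q + 1) → Fin n, Pi x i J *
      ∑ r : Fin (q + 1), (if s = J r then (1 : ℝ) else 0) *
        ∑ m : Fin n, W x m * A (Function.update J r m) with hS1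
  set SA := ∑ J : Fin (q + 1) → Fin n, Pi x i J * A J with hSA
  have hexp : ((q + 1).factorial : ℝ)⁻¹ * (2 * S1 - W x s * SA)
      = 2 * (((q + 1).factorial : ℝ)⁻¹ * S1) - W x s * (((q + 1).factorial : ℝ)⁻¹ * SA) := by
    ring
  rw [hexp, ← hWi] at H
  have h3 : ((q + 1).factorial : ℝ)⁻¹ * S1 = 0 := by linarith
  have hcinv : ((q + 1).factorial : ℝ)⁻¹ ≠ 0 :=
    inv_ne_zero (Nat.cast_ne_zero.mpr (Nat.factorial_ne_zero _))
  exact (mul_eq_zero.mp h3).resolve_left hcinv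

lemma quad {n q : ℕ}
    (Pi : (Fin n → ℝ) → Fin n → (Fin (q + 1) → Fin n) → ℝ)
    (hPismooth : ∀ (i : Fin n) (J : Fin (q + 1) → Fin n), ContDiff ℝ (⊤ : ℕ∞) fun x => Pi x i J)
    (hPialt : ∀ (x : Fin n → ℝ) (i : Fin n) (J : Fin (q + 1) → Fin n)
      (σ : Equiv.Perm (Fin (q + 1))),
      Pi x i (J ∘ σ) = ((Equiv.Perm.sign σ : ℤ) : ℝ) * Pi x i J)
    (hclosed : ∀ ξ η : (Fin n → ℝ) → (Fin (q + 1) → Fin n) → ℝ,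
      (∀ J, ContDiff ℝ (⊤ : ℕ∞) fun x => ξ x J) → (∀ J, ContDiff ℝ (⊤ : ℕ∞) fun x => η x J) →
      (∀ x J (σ : Equiv.Perm (Fin (q + 1))), ξ x (J ∘ σ) = ((Equiv.Perm.sign σ : ℤ) : ℝ) * ξ x J) →
      (∀ x J (σ : Equiv.Perm (Fin (q + 1))), η x (J ∘ σ) = ((Equiv.Perm.sign σ : ℤ) : ℝ) * η x J) →
      ∀ (x : Fin n → ℝ) (i : Fin n),
        lieBracketVF n (sharpMap n (q + 1) Pi ξ) (sharpMap n (q + 1) Pi η) x i =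
          sharpMap n (q + 1) Pi
            (fun y J => lieDerivForm n (q + 1) (sharpMap n (q + 1) Pi ξ) η y J -
              ∑ m : Fin n, sharpMap n (q + 1) Pi η y m * extDerivForm n (q + 1) ξ y (Fin.cons m J)) x i)
    (x : Fin n → ℝ) (K : Fin q → Fin n) (a b : Fin n) :
    Pi x a (Fin.cons a K) + Pi x a (Fin.cons b K)
      + Pi x b (Fin.cons a K) + Pi x b (Fin.cons b K) = 0 := by
  classical
  set α : Fin n → ℝ := fun t => (if t = a then (1 : ℝ) else 0) + (if t = b then 1 else 0)
    with hαdef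
  have hAalt : ∀ (J : Fin (q + 1) → Fin n) (σ : Equiv.Perm (Fin (q + 1))),
      Aform α K (J ∘ σ) = ((Equiv.Perm.sign σ : ℤ) : ℝ) * Aform α K J :=
    fun J σ => Aform_alt α K J σ
  set W' : Fin n → ℝ := fun m => ∑ t : Fin n, α t * Pi x m (Fin.cons t K) with hW'def
  have hfac : ((q + 1).factorial : ℝ) ≠ 0 := Nat.cast_ne_zero.mpr (Nat.factorial_ne_zero _)
  have hsharpA : ∀ m : Fin n,
      ∑ J : Fin (q + 1) → Fin n, Pi x m J * Aform α K J
        = ((q + 1).factorial : ℝ) * W' m := by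
    intro m
    exact sharp_Aform (fun i J => Pi x i J) (fun i J σ => hPialt x i J σ) α K m
  have hW : ∀ m : Fin n,
      sharpMap n (q + 1) Pi (fun _ J' => Aform α K J') x m = W' m := by
    intro m
    unfold sharpMap
    rw [hsharpA m, ← mul_assoc, inv_mul_cancel₀ hfac, one_mul]
  -- instances of core
  have hcore : ∀ i s : Fin n,
      ∑ J : Fin (q + 1) → Fin n, Pi x i J *
        ∑ r : Fin (q + 1), (if s = J r then (1 : ℝ) else 0) *
          ∑ m : Fin n, W' m * Aform α K (Function.update J r m) = 0 := by
    intro i s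
    have h := core Pi hPismooth hclosed (Aform α K) hAalt x s i
    simp only [hW] at h
    exact h
  -- contract with α in s
  have hstage : ∀ i : Fin n,
      (∑ t : Fin n, α t * W' t) * (((q + 1).factorial : ℝ) * W' i) = 0 := by
    intro i
    have h1 : ∑ s : Fin n, α s *
        (∑ J : Fin (q + 1) → Fin n, Pi x i J *
          ∑ r : Fin (q + 1), (if s = J r then (1 : ℝ) else 0) *
            ∑ m : Fin n, W' m * Aform α K (Function.update J r m)) = 0 := by
      rw [Finset.sum_congr rfl fun s _ => by rw [hcore i s, mul_zero]]
      exact Finset.sum_const_zero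
    have h2 : ∑ s : Fin n, α s *
        (∑ J : Fin (q + 1) → Fin n, Pi x i J *
          ∑ r : Fin (q + 1), (if s = J r then (1 : ℝ) else 0) *
            ∑ m : Fin n, W' m * Aform α K (Function.update J r m))
        = ∑ J : Fin (q + 1) → Fin n, Pi x i J *
            ∑ r : Fin (q + 1), α (J r) *
              ∑ m : Fin n, W' m * Aform α K (Function.update J r m) := by
      rw [Finset.sum_congr rfl fun s _ => Finset.mul_sum _ _ _, Finset.sum_comm]
      refine Finset.sum_congr rfl fun J _ => ?_
      have e1 : ∀ s : Fin n, α s * (Pi x i J *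
          ∑ r : Fin (q + 1), (if s = J r then (1 : ℝ) else 0) *
            ∑ m : Fin n, W' m * Aform α K (Function.update J r m))
          = Pi x i J * (α s *
          ∑ r : Fin (q + 1), (if s = J r then (1 : ℝ) else 0) *
            ∑ m : Fin n, W' m * Aform α K (Function.update J r m)) := fun s => by ring
      rw [Finset.sum_congr rfl fun s _ => e1 s, ← Finset.mul_sum]
      congr 1
      rw [Finset.sum_congr rfl fun s _ => Finset.mul_sum _ _ _, Finset.sum_comm]
      refine Finset.sum_congr rfl fun r _ => ?_
      have e2 : ∀ s : Fin n, α s * ((if s = J r then (1 : ℝ) else 0) *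
            ∑ m : Fin n, W' m * Aform α K (Function.update J r m))
          = (if s = J r then α s else 0) *
            ∑ m : Fin n, W' m * Aform α K (Function.update J r m) := by
        intro s; split_ifs <;> ring
      rw [Finset.sum_congr rfl fun s _ => e2 s, ← Finset.sum_mul,
        Finset.sum_ite_eq' Finset.univ (J r) α]
      simp
    have h3a : ∑ J : Fin (q + 1) → Fin n, Pi x i J *
            ∑ r : Fin (q + 1), α (J r) *
              ∑ m : Fin n, W' m * Aform α K (Function.update J r m)
        = ∑ J : Fin (q + 1) → Fin n,
            (∑ t : Fin n, α t * W' t) * (Pi x i J * Aform α K J) := by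
      refine Finset.sum_congr rfl fun J _ => ?_
      rw [key_identity α K W' J]
      ring
    rw [h2, h3a, ← Finset.mul_sum, hsharpA i] at h1
    exact h1
  set aw : ℝ := ∑ t : Fin n, α t * W' t with hawdef
  have hfin : aw * (((q + 1).factorial : ℝ) * aw) = 0 := by
    have h4 : ∑ i : Fin n, α i * (aw * (((q + 1).factorial : ℝ) * W' i)) = 0 := by
      rw [Finset.sum_congr rfl fun i _ => by rw [hstage i, mul_zero]]
      exact Finset.sum_const_zero
    have h5 : ∑ i : Fin n, α i * (aw * (((q + 1).factorial : ℝ) * W' i))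
        = aw * (((q + 1).factorial : ℝ) * ∑ i : Fin n, α i * W' i) := by
      rw [Finset.mul_sum Finset.univ (fun i => α i * W' i) ((q + 1).factorial : ℝ),
        Finset.mul_sum Finset.univ
          (fun i => ((q + 1).factorial : ℝ) * (α i * W' i)) aw]
      exact Finset.sum_congr rfl fun i _ => by ring
    rw [h5, ← hawdef] at h4
    exact h4
  have haw : aw = 0 := by
    rcases mul_eq_zero.mp hfin with h | h
    · exact h
    · rcases mul_eq_zero.mp h with h' | h'
      · exact absurd h' hfac
      · exact h'
  have hW'v : ∀ m : Fin n, W' m = Pi x m (Fin.cons a K) + Pi x m (Fin.cons b K) := by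
    intro m
    simp only [hW'def]
    have e1 : ∀ t : Fin n, α t * Pi x m (Fin.cons t K)
        = (if t = a then Pi x m (Fin.cons t K) else 0)
          + (if t = b then Pi x m (Fin.cons t K) else 0) := by
      intro t; simp only [hαdef]; split_ifs <;> ring
    rw [Finset.sum_congr rfl fun t _ => e1 t, Finset.sum_add_distrib,
      Finset.sum_ite_eq' Finset.univ a (fun t => Pi x m (Fin.cons t K)),
      Finset.sum_ite_eq' Finset.univ b (fun t => Pi x m (Fin.cons t K))]
    simp
  have hexp : aw = Pi x a (Fin.cons a K) + Pi x a (Fin.cons b K)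
      + (Pi x b (Fin.cons a K) + Pi x b (Fin.cons b K)) := by
    rw [hawdef]
    have e1 : ∀ t : Fin n, α t * W' t
        = (if t = a then W' t else 0) + (if t = b then W' t else 0) := by
      intro t; simp only [hαdef]; split_ifs <;> ring
    rw [Finset.sum_congr rfl fun t _ => e1 t, Finset.sum_add_distrib,
      Finset.sum_ite_eq' Finset.univ a W', Finset.sum_ite_eq' Finset.univ b W']
    simp only [Finset.mem_univ, if_true]
    rw [hW'v a, hW'v b]
  rw [haw] at hexp
  linarith

lemma pair {n q : ℕ}
    (Pi : (Fin n → ℝ) → Fin n → (Fin (q + 1) → Fin n) → ℝ)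
    (hPismooth : ∀ (i : Fin n) (J : Fin (q + 1) → Fin n), ContDiff ℝ (⊤ : ℕ∞) fun x => Pi x i J)
    (hPialt : ∀ (x : Fin n → ℝ) (i : Fin n) (J : Fin (q + 1) → Fin n)
      (σ : Equiv.Perm (Fin (q + 1))),
      Pi x i (J ∘ σ) = ((Equiv.Perm.sign σ : ℤ) : ℝ) * Pi x i J)
    (hclosed : ∀ ξ η : (Fin n → ℝ) → (Fin (q + 1) → Fin n) → ℝ,
      (∀ J, ContDiff ℝ (⊤ : ℕ∞) fun x => ξ x J) → (∀ J, ContDiff ℝ (⊤ : ℕ∞) fun x => η x J) →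
      (∀ x J (σ : Equiv.Perm (Fin (q + 1))), ξ x (J ∘ σ) = ((Equiv.Perm.sign σ : ℤ) : ℝ) * ξ x J) →
      (∀ x J (σ : Equiv.Perm (Fin (q + 1))), η x (J ∘ σ) = ((Equiv.Perm.sign σ : ℤ) : ℝ) * η x J) →
      ∀ (x : Fin n → ℝ) (i : Fin n),
        lieBracketVF n (sharpMap n (q + 1) Pi ξ) (sharpMap n (q + 1) Pi η) x i =
          sharpMap n (q + 1) Pi
            (fun y J => lieDerivForm n (q + 1) (sharpMap n (q + 1) Pi ξ) η y J -
              ∑ m : Fin n, sharpMap n (q + 1) Pi η y m * extDerivForm n (q + 1) ξ y (Fin.cons m J)) x i)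
    (x : Fin n → ℝ) (K : Fin q → Fin n) (a b : Fin n) :
    Pi x a (Fin.cons b K) + Pi x b (Fin.cons a K) = 0 := by
  have hdiag : ∀ c : Fin n, Pi x c (Fin.cons c K) = 0 := by
    intro c
    have h := quad Pi hPismooth hPialt hclosed x K c c
    linarith
  have h := quad Pi hPismooth hPialt hclosed x K a b
  have ha := hdiag a
  have hb := hdiag b
  linarith

end DorfmanAux

open DorfmanAux

/-- If the graph `G_Π = {Π♯(ξ) + ξ}` of a (smooth) bundle morphism
`Π♯ : Λᵖ T*M → TM` is closed under the higher Dorfman bracket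
`[V+ξ, W+η]_D = [V,W] + L_V η - i_W dξ`, i.e. for all `p`-forms `ξ, η`
`[Π♯ξ, Π♯η] = Π♯(L_{Π♯ξ} η - i_{Π♯η} dξ)`, then the `(p+1)`-tensor
`Π(α, ξ) = ⟨α, Π♯(ξ)⟩` is totally antisymmetric, i.e. a `(p+1)`-vector field. -/
theorem graph_closed_dorfman_implies_multivector {n p : ℕ}
    (Pi : (Fin n → ℝ) → Fin n → (Fin p → Fin n) → ℝ)
    (hPismooth : ∀ (i : Fin n) (J : Fin p → Fin n), ContDiff ℝ (⊤ : ℕ∞) fun x => Pi x i J)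
    (hPialt : ∀ (x : Fin n → ℝ) (i : Fin n) (J : Fin p → Fin n) (σ : Equiv.Perm (Fin p)),
      Pi x i (J ∘ σ) = ((Equiv.Perm.sign σ : ℤ) : ℝ) * Pi x i J)
    (hclosed : ∀ ξ η : (Fin n → ℝ) → (Fin p → Fin n) → ℝ,
      (∀ J, ContDiff ℝ (⊤ : ℕ∞) fun x => ξ x J) → (∀ J, ContDiff ℝ (⊤ : ℕ∞) fun x => η x J) →
      (∀ x J (σ : Equiv.Perm (Fin p)), ξ x (J ∘ σ) = ((Equiv.Perm.sign σ : ℤ) : ℝ) * ξ x J) →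
      (∀ x J (σ : Equiv.Perm (Fin p)), η x (J ∘ σ) = ((Equiv.Perm.sign σ : ℤ) : ℝ) * η x J) →
      ∀ (x : Fin n → ℝ) (i : Fin n),
        lieBracketVF n (sharpMap n p Pi ξ) (sharpMap n p Pi η) x i =
          sharpMap n p Pi
            (fun y J => lieDerivForm n p (sharpMap n p Pi ξ) η y J -
              ∑ m : Fin n, sharpMap n p Pi η y m * extDerivForm n p ξ y (Fin.cons m J)) x i) :
    ∀ (x : Fin n → ℝ) (v : Fin (p + 1) → Fin n) (σ : Equiv.Perm (Fin (p + 1))),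
      Pi x ((v ∘ σ) 0) (Fin.tail (v ∘ σ)) =
        ((Equiv.Perm.sign σ : ℤ) : ℝ) * Pi x (v 0) (Fin.tail v) := by
  
  cases p with
  | zero =>
    intro x v σ
    have hσ : σ = 1 := Equiv.ext fun k => by
      have h1 : σ k = 0 := Fin.eq_zero _
      have h2 : (1 : Equiv.Perm (Fin (0 + 1))) k = 0 := Fin.eq_zero _
      rw [h1, h2]
    subst hσ
    have h1 : v ∘ ⇑(1 : Equiv.Perm (Fin 1)) = v := rfl
    rw [h1]
    simp
  | succ q =>
    intro x v σ
    -- swap of two tail entries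
    have hswapTail : ∀ (w : Fin (q + 2) → Fin n) (c d : Fin (q + 1)), c ≠ d →
        Pi x ((w ∘ ⇑(Equiv.swap c.succ d.succ)) 0) (Fin.tail (w ∘ ⇑(Equiv.swap c.succ d.succ)))
          = -(Pi x (w 0) (Fin.tail w)) := by
      intro w c d hcd
      have h0 : (w ∘ ⇑(Equiv.swap c.succ d.succ)) 0 = w 0 := by
        show w (Equiv.swap c.succ d.succ 0) = w 0
        rw [Equiv.swap_apply_of_ne_of_ne (Fin.succ_ne_zero c).symm (Fin.succ_ne_zero d).symm]
      have hs : ∀ j : Fin (q + 1), Equiv.swap c.succ d.succ j.succ = (Equiv.swap c d j).succ := by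
        intro j
        rcases eq_or_ne j c with rfl | hjc
        · rw [Equiv.swap_apply_left, Equiv.swap_apply_left]
        rcases eq_or_ne j d with rfl | hjd
        · rw [Equiv.swap_apply_right, Equiv.swap_apply_right]
        · rw [Equiv.swap_apply_of_ne_of_ne
              (fun h => hjc (Fin.succ_injective _ h)) (fun h => hjd (Fin.succ_injective _ h)),
            Equiv.swap_apply_of_ne_of_ne hjc hjd]
      have ht : Fin.tail (w ∘ ⇑(Equiv.swap c.succ d.succ)) = (Fin.tail w) ∘ ⇑(Equiv.swap c d) := by
        funext j
        show w (Equiv.swap c.succ d.succ j.succ) = w ((Equiv.swap c d j).succ)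
        rw [hs j]
      rw [h0, ht, hPialt x (w 0) (Fin.tail w) (Equiv.swap c d), Equiv.Perm.sign_swap hcd]
      norm_num
    -- swap of slots 0 and 1
    have hswap01 : ∀ w : Fin (q + 2) → Fin n,
        Pi x ((w ∘ ⇑(Equiv.swap (0 : Fin (q + 2)) 1)) 0)
            (Fin.tail (w ∘ ⇑(Equiv.swap (0 : Fin (q + 2)) 1)))
          = -(Pi x (w 0) (Fin.tail w)) := by
      intro w
      have h0 : (w ∘ ⇑(Equiv.swap (0 : Fin (q + 2)) 1)) 0 = w 1 := by
        show w (Equiv.swap (0 : Fin (q + 2)) 1 0) = w 1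
        rw [Equiv.swap_apply_left]
      have ht : Fin.tail (w ∘ ⇑(Equiv.swap (0 : Fin (q + 2)) 1))
          = Fin.cons (w 0) (fun j : Fin q => w j.succ.succ) := by
        funext j
        refine Fin.cases ?_ ?_ j
        · show w (Equiv.swap (0 : Fin (q + 2)) 1 (Fin.succ 0)) = _
          rw [Fin.succ_zero_eq_one', Equiv.swap_apply_right]
          simp
        · intro j'
          show w (Equiv.swap (0 : Fin (q + 2)) 1 j'.succ.succ) = _
          rw [Equiv.swap_apply_of_ne_of_ne (Fin.succ_ne_zero _)
            (fun h => Fin.succ_ne_zero j'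
              (Fin.succ_injective _ (h.trans (Fin.succ_zero_eq_one' (n := q + 1)).symm)))]
          simp [Fin.cons_succ]
      have htw : Fin.tail w = Fin.cons (w 1) (fun j : Fin q => w j.succ.succ) := by
        funext j
        refine Fin.cases ?_ ?_ j
        · show w (Fin.succ 0) = _
          rw [Fin.succ_zero_eq_one']
          simp
        · intro j'
          simp [Fin.tail, Fin.cons_succ]
      rw [h0, ht, htw]
      have hp := pair Pi hPismooth hPialt hclosed x (fun j : Fin q => w j.succ.succ) (w 1) (w 0)
      linarith
    -- swap of slot 0 with any successor slot
    have hswap0succ : ∀ (w : Fin (q + 2) → Fin n) (d : Fin (q + 1)),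
        Pi x ((w ∘ ⇑(Equiv.swap (0 : Fin (q + 2)) d.succ)) 0)
            (Fin.tail (w ∘ ⇑(Equiv.swap (0 : Fin (q + 2)) d.succ)))
          = -(Pi x (w 0) (Fin.tail w)) := by
      intro w d
      rcases Fin.eq_zero_or_eq_succ d with rfl | ⟨d', rfl⟩
      · rw [Fin.succ_zero_eq_one']
        exact hswap01 w
      · have h1 : (Equiv.swap (Fin.succ (0 : Fin (q + 1))) d'.succ.succ) 0 = 0 :=
          Equiv.swap_apply_of_ne_of_ne (Fin.succ_ne_zero _).symm (Fin.succ_ne_zero _).symm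
        have h2 : (Equiv.swap (Fin.succ (0 : Fin (q + 1))) d'.succ.succ) 1 = d'.succ.succ := by
          rw [← Fin.succ_zero_eq_one', Equiv.swap_apply_left]
        have hf : Equiv.swap (0 : Fin (q + 2)) d'.succ.succ
            = Equiv.swap (Fin.succ (0 : Fin (q + 1))) d'.succ.succ
              * Equiv.swap (0 : Fin (q + 2)) 1
              * Equiv.swap (Fin.succ (0 : Fin (q + 1))) d'.succ.succ := by
          calc Equiv.swap (0 : Fin (q + 2)) d'.succ.succ
              = Equiv.swap ((Equiv.swap (Fin.succ (0 : Fin (q + 1))) d'.succ.succ) 0)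
                  ((Equiv.swap (Fin.succ (0 : Fin (q + 1))) d'.succ.succ) 1) := by
                rw [h1, h2]
            _ = Equiv.swap (Fin.succ (0 : Fin (q + 1))) d'.succ.succ
                  * Equiv.swap (0 : Fin (q + 2)) 1
                  * (Equiv.swap (Fin.succ (0 : Fin (q + 1))) d'.succ.succ)⁻¹ :=
                Equiv.swap_apply_apply _ 0 1
            _ = _ := by rw [Equiv.swap_inv]
        rw [hf]
        have hcomp : w ∘ ⇑(Equiv.swap (Fin.succ (0 : Fin (q + 1))) d'.succ.succ
              * Equiv.swap (0 : Fin (q + 2)) 1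
              * Equiv.swap (Fin.succ (0 : Fin (q + 1))) d'.succ.succ)
            = ((w ∘ ⇑(Equiv.swap (Fin.succ (0 : Fin (q + 1))) d'.succ.succ))
                ∘ ⇑(Equiv.swap (0 : Fin (q + 2)) 1))
              ∘ ⇑(Equiv.swap (Fin.succ (0 : Fin (q + 1))) d'.succ.succ) := rfl
        rw [hcomp]
        have hne : (0 : Fin (q + 1)) ≠ d'.succ := (Fin.succ_ne_zero d').symm
        rw [hswapTail _ 0 d'.succ hne,
          hswap01 (w ∘ ⇑(Equiv.swap (Fin.succ (0 : Fin (q + 1))) d'.succ.succ)),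
          hswapTail w 0 d'.succ hne]
        ring
    -- arbitrary transposition
    have hswapAll : ∀ (w : Fin (q + 2) → Fin n) (c d : Fin (q + 2)), c ≠ d →
        Pi x ((w ∘ ⇑(Equiv.swap c d)) 0) (Fin.tail (w ∘ ⇑(Equiv.swap c d)))
          = -(Pi x (w 0) (Fin.tail w)) := by
      intro w c d hcd
      rcases Fin.eq_zero_or_eq_succ c with rfl | ⟨c', rfl⟩
      · rcases Fin.eq_zero_or_eq_succ d with rfl | ⟨d', rfl⟩
        · exact absurd rfl hcd
        · exact hswap0succ w d'
      · rcases Fin.eq_zero_or_eq_succ d with rfl | ⟨d', rfl⟩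
        · rw [Equiv.swap_comm]
          exact hswap0succ w c'
        · exact hswapTail w c' d' (fun h => hcd (by rw [h]))
    -- induction over the permutation
    have hperm : ∀ (σ : Equiv.Perm (Fin (q + 2))) (w : Fin (q + 2) → Fin n),
        Pi x ((w ∘ ⇑σ) 0) (Fin.tail (w ∘ ⇑σ))
          = ((Equiv.Perm.sign σ : ℤ) : ℝ) * Pi x (w 0) (Fin.tail w) := by
      intro σ
      refine Equiv.Perm.swap_induction_on σ ?_ ?_
      · intro w
        have h1 : w ∘ ⇑(1 : Equiv.Perm (Fin (q + 2))) = w := rfl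
        rw [h1]
        simp
      · intro f c d hcd IH w
        have h2 : w ∘ ⇑(Equiv.swap c d * f) = (w ∘ ⇑(Equiv.swap c d)) ∘ ⇑f := rfl
        have hsgn : ((Equiv.Perm.sign (Equiv.swap c d * f) : ℤ) : ℝ)
            = -(((Equiv.Perm.sign f : ℤ) : ℝ)) := by
          rw [Equiv.Perm.sign_mul, Equiv.Perm.sign_swap hcd]
          push_cast
          ring
        rw [h2, IH (w ∘ ⇑(Equiv.swap c d)), hswapAll w c d hcd, hsgn]
        ring
    exact hperm σ v
end
end

section
/- Let V be a finite-dimensional real vector space, g an inner product on V, g̃ an inner product on ΛᵖV, and C: ΛᵖV → V* a linear map. Let P: V → V and P̃: ΛᵖV → ΛᵖV be the orthogonal projectors (w.r.t. g and g̃) onto (ker Cᵀ)^⊥ and (ker C)^⊥ respectively. Then there exists a unique linear map Π: ΛᵖV* → V such that ΠCᵀ = -P, ΠᵀC = -P̃, PΠ = Π, and P̃Πᵀ = Πᵀ; moreover, with this Π, the open-closed relations yield G = P'ᵀ g P' + C g̃⁻¹ Cᵀ, G̃ = P̃'ᵀ g̃ P̃' + Cᵀ g⁻¹ C, and Φ =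 -C, where P' = 1 - P and P̃' = 1 - P̃. -/
open Matrix

private lemma matrix_eq_of_mulVecLin {a b : ℕ} {A B : Matrix (Fin a) (Fin b) ℝ}
    (h : A.mulVecLin = B.mulVecLin) : A = B := by
  have h2 := congrArg LinearMap.toMatrix' h
  simpa only [← Matrix.toLin'_apply', LinearMap.toMatrix'_toLin'] using h2

private lemma mul_eq_zero_of_ker_le {a b c d : ℕ} {A : Matrix (Fin a) (Fin b) ℝ}
    {B : Matrix (Fin c) (Fin b) ℝ} {X : Matrix (Fin b) (Fin d) ℝ}
    (h : LinearMap.ker A.mulVecLin ≤ LinearMap.ker B.mulVecLin) (hX : A * X = 0) :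
    B * X = 0 := by
  apply matrix_eq_of_mulVecLin
  rw [Matrix.mulVecLin_mul, Matrix.mulVecLin_zero]
  refine LinearMap.ext fun v => ?_
  have hAX : A.mulVecLin (X.mulVecLin v) = 0 := by
    have h2 : (A * X).mulVecLin v = (0 : Matrix (Fin a) (Fin d) ℝ).mulVecLin v := by rw [hX]
    rwa [Matrix.mulVecLin_mul, LinearMap.comp_apply, Matrix.mulVecLin_zero,
      LinearMap.zero_apply] at h2
  simpa using h (LinearMap.mem_ker.mpr hAX)

private lemma exists_factor {a b c : ℕ} {A : Matrix (Fin a) (Fin b) ℝ} {B : Matrix (Fin c) (Fin b) ℝ}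
    (h : LinearMap.ker A.mulVecLin ≤ LinearMap.ker B.mulVecLin) :
    ∃ L : Matrix (Fin c) (Fin a) ℝ, L * A = B := by
  set f := A.mulVecLin with hf
  obtain ⟨s, hs⟩ := f.rangeRestrict.exists_rightInverse_of_surjective
    (LinearMap.range_rangeRestrict f)
  obtain ⟨q, hq⟩ := (LinearMap.range f).exists_isCompl
  set π := (LinearMap.range f).linearProjOfIsCompl q hq with hπ
  set φ := B.mulVecLin ∘ₗ (s ∘ₗ (π : (Fin a → ℝ) →ₗ[ℝ] LinearMap.range f)) with hφdef
  refine ⟨LinearMap.toMatrix' φ, ?_⟩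
  apply matrix_eq_of_mulVecLin
  rw [Matrix.mulVecLin_mul]
  have hL : (LinearMap.toMatrix' φ).mulVecLin = φ := Matrix.toLin'_toMatrix' φ
  rw [hL]
  refine LinearMap.ext fun x => ?_
  have h1 : π (f x) = ⟨f x, LinearMap.mem_range_self f x⟩ :=
    Submodule.linearProjOfIsCompl_apply_left hq ⟨f x, LinearMap.mem_range_self f x⟩
  have h2 : f (s ⟨f x, LinearMap.mem_range_self f x⟩) = f x := by
    have h3 := LinearMap.ext_iff.mp hs ⟨f x, LinearMap.mem_range_self f x⟩
    exact congrArg Subtype.val h3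
  have h4 : s ⟨f x, LinearMap.mem_range_self f x⟩ - x ∈ LinearMap.ker f := by
    simp [LinearMap.mem_ker, map_sub, h2]
  have h5 := h h4
  rw [LinearMap.mem_ker, map_sub, sub_eq_zero] at h5
  show B.mulVecLin (s (π (f x))) = B.mulVecLin x
  rw [h1]
  simpa using h5

/-- **Background independent gauge.**  Let `V` (dimension `n`) carry an inner product `g` and
`ΛᵖV` (dimension `m`) an inner product `g̃`, both given by positive definite matrices, and let
`C : ΛᵖV → V*` be a linear map (an `n×m` matrix `C_{iJ}`).  Let `P` and `P̃` be the orthogonal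
projectors (idempotent and self-adjoint w.r.t. `g` resp. `g̃`) onto `(ker Cᵀ)^⊥` resp.
`(ker C)^⊥`, i.e. with `ker P = ker Cᵀ` and `ker P̃ = ker C`.  Then there is a unique
`Π : ΛᵖV* → V` with `ΠCᵀ = -P`, `ΠᵀC = -P̃`, `PΠ = Π` and `P̃Πᵀ = Πᵀ`; moreover with this `Π`
the open-closed relations hold with `G = P'ᵀ g P' + C g̃⁻¹ Cᵀ`, `G̃ = P̃'ᵀ g̃ P̃' + Cᵀ g⁻¹ C`
and `Φ = -C`, where `P' = 1 - P`, `P̃' = 1 - P̃`. -/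
theorem background_independent_gauge {n m : ℕ}
    (g : Matrix (Fin n) (Fin n) ℝ) (gt : Matrix (Fin m) (Fin m) ℝ)
    (C : Matrix (Fin n) (Fin m) ℝ)
    (hg : g.PosDef) (hgt : gt.PosDef)
    (P : Matrix (Fin n) (Fin n) ℝ) (Pt : Matrix (Fin m) (Fin m) ℝ)
    (hPidem : P * P = P) (hPsa : Pᵀ * g = g * P)
    (hPker : LinearMap.ker P.mulVecLin = LinearMap.ker Cᵀ.mulVecLin)
    (hPtidem : Pt * Pt = Pt) (hPtsa : Ptᵀ * gt = gt * Pt)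
    (hPtker : LinearMap.ker Pt.mulVecLin = LinearMap.ker C.mulVecLin) :
    (∃! Pi : Matrix (Fin n) (Fin m) ℝ,
      Pi * Cᵀ = -P ∧ Piᵀ * C = -Pt ∧ P * Pi = Pi ∧ Pt * Piᵀ = Piᵀ) ∧
    (∀ Pi : Matrix (Fin n) (Fin m) ℝ,
      (Pi * Cᵀ = -P ∧ Piᵀ * C = -Pt ∧ P * Pi = Pi ∧ Pt * Piᵀ = Piᵀ) →
      (fromBlocks g C (-Cᵀ) gt)⁻¹ =
        (fromBlocks ((1 - P)ᵀ * g * (1 - P) + C * gt⁻¹ * Cᵀ) (-C)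
            (-(-C)ᵀ) ((1 - Pt)ᵀ * gt * (1 - Pt) + Cᵀ * g⁻¹ * C))⁻¹ +
          fromBlocks 0 Pi (-Piᵀ) 0) := by
  -- kernel-derived multiplicative facts
  have hCtP : Cᵀ * P = Cᵀ := by
    have h0 : P * (1 - P) = 0 := by rw [Matrix.mul_sub, Matrix.mul_one, hPidem, sub_self]
    have h1 := mul_eq_zero_of_ker_le hPker.le h0
    rw [Matrix.mul_sub, Matrix.mul_one, sub_eq_zero] at h1
    exact h1.symm
  have hCPt : C * Pt = C := by
    have h0 : Pt * (1 - Pt) = 0 := by rw [Matrix.mul_sub, Matrix.mul_one, hPtidem, sub_self]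
    have h1 := mul_eq_zero_of_ker_le hPtker.le h0
    rw [Matrix.mul_sub, Matrix.mul_one, sub_eq_zero] at h1
    exact h1.symm
  have hPtC : Pᵀ * C = C := by
    have h0 := congrArg Matrix.transpose hCtP
    simpa [Matrix.transpose_mul] using h0
  have hPttCt : Ptᵀ * Cᵀ = Cᵀ := by
    have h0 := congrArg Matrix.transpose hCPt
    simpa [Matrix.transpose_mul] using h0
  -- construction of Pi0
  obtain ⟨L, hL⟩ := exists_factor (A := Cᵀ) (B := P) hPker.ge
  have hLC : C * Lᵀ = Pᵀ := by
    have h0 := congrArg Matrix.transpose hL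
    simpa [Matrix.transpose_mul] using h0
  have hPtLtC : Pt * (Lᵀ * C) = Pt := by
    have h0 : C * (Lᵀ * C - 1) = 0 := by
      rw [Matrix.mul_sub, Matrix.mul_one, ← Matrix.mul_assoc, hLC, hPtC, sub_self]
    have h1 := mul_eq_zero_of_ker_le hPtker.ge h0
    rw [Matrix.mul_sub, Matrix.mul_one, sub_eq_zero] at h1
    exact h1
  set Pi0 : Matrix (Fin n) (Fin m) ℝ := -(P * (L * Ptᵀ)) with hPi0
  have hPi0t : Pi0ᵀ = -(Pt * (Lᵀ * Pᵀ)) := by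
    rw [hPi0]
    simp [Matrix.transpose_mul, Matrix.mul_assoc]
  have c1 : Pi0 * Cᵀ = -P := by
    rw [hPi0, Matrix.neg_mul, Matrix.mul_assoc, Matrix.mul_assoc, hPttCt, hL, hPidem]
  have c2 : Pi0ᵀ * C = -Pt := by
    rw [hPi0t, Matrix.neg_mul, Matrix.mul_assoc, Matrix.mul_assoc, hPtC, hPtLtC]
  have c3 : P * Pi0 = Pi0 := by
    rw [hPi0, Matrix.mul_neg, ← Matrix.mul_assoc, hPidem]
  have c4 : Pt * Pi0ᵀ = Pi0ᵀ := by
    rw [hPi0t, Matrix.mul_neg, ← Matrix.mul_assoc, hPtidem]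
  constructor
  · refine ⟨Pi0, ⟨c1, c2, c3, c4⟩, fun y hy => ?_⟩
    obtain ⟨e1, e2, e3, e4⟩ := hy
    have hdt : (y - Pi0)ᵀ * C = 0 := by
      rw [Matrix.transpose_sub, Matrix.sub_mul, e2, c2, sub_self]
    have hCP0 : C * Pi0ᵀ = -Pᵀ := by
      have h0 := congrArg Matrix.transpose c1
      simpa [Matrix.transpose_mul] using h0
    have h6 : (y - Pi0)ᵀ * Pᵀ = 0 := by
      calc (y - Pi0)ᵀ * Pᵀ = (y - Pi0)ᵀ * -(C * Pi0ᵀ) := by rw [hCP0, neg_neg]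
        _ = -((y - Pi0)ᵀ * C * Pi0ᵀ) := by rw [Matrix.mul_neg, Matrix.mul_assoc]
        _ = 0 := by rw [hdt, Matrix.zero_mul, neg_zero]
    have h7 : P * (y - Pi0) = 0 := by
      have h8 := congrArg Matrix.transpose h6
      simpa [Matrix.transpose_mul] using h8
    have h9 : P * (y - Pi0) = y - Pi0 := by rw [Matrix.mul_sub, e3, c3]
    have h10 : y - Pi0 = 0 := by rw [← h9, h7]
    exact sub_eq_zero.mp h10
  · rintro Pi ⟨e1, e2, e3, e4⟩
    simp only [Matrix.transpose_neg, neg_neg]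
    -- notation
    set M : Matrix (Fin n ⊕ Fin m) (Fin n ⊕ Fin m) ℝ := fromBlocks g C (-Cᵀ) gt with hM
    set G : Matrix (Fin n) (Fin n) ℝ := (1 - P)ᵀ * g * (1 - P) + C * gt⁻¹ * Cᵀ with hG
    set Gt : Matrix (Fin m) (Fin m) ℝ := (1 - Pt)ᵀ * gt * (1 - Pt) + Cᵀ * g⁻¹ * C with hGt
    set N : Matrix (Fin n ⊕ Fin m) (Fin n ⊕ Fin m) ℝ := fromBlocks G (-C) Cᵀ Gt with hN
    set θ : Matrix (Fin n ⊕ Fin m) (Fin n ⊕ Fin m) ℝ := fromBlocks 0 Pi (-Piᵀ) 0 with hθ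
    -- invertibility facts
    have hgu : IsUnit g.det := isUnit_iff_ne_zero.mpr hg.det_pos.ne'
    have hgtu : IsUnit gt.det := isUnit_iff_ne_zero.mpr hgt.det_pos.ne'
    haveI : Invertible g := g.invertibleOfIsUnitDet hgu
    haveI : Invertible gt := gt.invertibleOfIsUnitDet hgtu
    have hg1 : g * g⁻¹ = 1 := Matrix.mul_nonsing_inv g hgu
    have hgt1 : gt * gt⁻¹ = 1 := Matrix.mul_nonsing_inv gt hgtu
    -- commuting projectors past inverse metrics
    have hgP : g⁻¹ * Pᵀ = P * g⁻¹ := by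
      calc g⁻¹ * Pᵀ = g⁻¹ * (Pᵀ * g * g⁻¹) := by rw [Matrix.mul_inv_cancel_right_of_invertible]
        _ = g⁻¹ * (g * P * g⁻¹) := by rw [hPsa]
        _ = P * g⁻¹ := by rw [Matrix.mul_assoc g P g⁻¹, Matrix.inv_mul_cancel_left_of_invertible]
    have hgtPt : gt⁻¹ * Ptᵀ = Pt * gt⁻¹ := by
      calc gt⁻¹ * Ptᵀ = gt⁻¹ * (Ptᵀ * gt * gt⁻¹) := by
            rw [Matrix.mul_inv_cancel_right_of_invertible]
        _ = gt⁻¹ * (gt * Pt * gt⁻¹) := by rw [hPtsa]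
        _ = Pt * gt⁻¹ := by
            rw [Matrix.mul_assoc gt Pt gt⁻¹, Matrix.inv_mul_cancel_left_of_invertible]
    -- transposes of the Pi conditions
    have hCPit : C * Piᵀ = -Pᵀ := by
      have h0 := congrArg Matrix.transpose e1
      simpa [Matrix.transpose_mul] using h0
    have hCtPi : Cᵀ * Pi = -Ptᵀ := by
      have h0 := congrArg Matrix.transpose e2
      simpa [Matrix.transpose_mul] using h0
    -- M is invertible (Schur complement)
    have hS : (gt - -Cᵀ * ⅟g * C).PosDef := by
      have hinv : ⅟g = g⁻¹ := Matrix.invOf_eq_nonsing_inv g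
      have he : gt - -Cᵀ * ⅟g * C = gt + Cᵀ * g⁻¹ * C := by
        rw [hinv, Matrix.neg_mul, Matrix.neg_mul, sub_neg_eq_add]
      rw [he]
      refine hgt.add_posSemidef ?_
      have h0 := hg.inv.posSemidef.conjTranspose_mul_mul_same C
      simpa [Matrix.conjTranspose_eq_transpose_of_trivial] using h0
    have hMu : IsUnit M.det := by
      rw [hM, Matrix.det_fromBlocks₁₁]
      exact isUnit_iff_ne_zero.mpr (mul_ne_zero hg.det_pos.ne' hS.det_pos.ne')
    have hM1 : M * M⁻¹ = 1 := Matrix.mul_nonsing_inv M hMu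
    -- projector identities with the metrics
    have hprojg : (1 - P)ᵀ * g * (1 - P) = g - g * P := by
      have h0 : g * (1 - P) = (1 - P)ᵀ * g := by
        rw [Matrix.transpose_sub, Matrix.transpose_one, Matrix.mul_sub, Matrix.sub_mul,
          Matrix.mul_one, Matrix.one_mul, hPsa]
      rw [Matrix.mul_assoc, h0, ← Matrix.mul_assoc, ← Matrix.transpose_mul]
      have h1 : (1 - P) * (1 - P) = 1 - P := by
        rw [Matrix.mul_sub, Matrix.mul_one, Matrix.sub_mul, Matrix.one_mul, hPidem, sub_self,
          sub_zero]
      rw [h1, ← h0, Matrix.mul_sub, Matrix.mul_one]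
    have hprojgt : (1 - Pt)ᵀ * gt * (1 - Pt) = gt - gt * Pt := by
      have h0 : gt * (1 - Pt) = (1 - Pt)ᵀ * gt := by
        rw [Matrix.transpose_sub, Matrix.transpose_one, Matrix.mul_sub, Matrix.sub_mul,
          Matrix.mul_one, Matrix.one_mul, hPtsa]
      rw [Matrix.mul_assoc, h0, ← Matrix.mul_assoc, ← Matrix.transpose_mul]
      have h1 : (1 - Pt) * (1 - Pt) = 1 - Pt := by
        rw [Matrix.mul_sub, Matrix.mul_one, Matrix.sub_mul, Matrix.one_mul, hPtidem, sub_self,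
          sub_zero]
      rw [h1, ← h0, Matrix.mul_sub, Matrix.mul_one]
    -- products with G and Gt
    have h1P : (1 - P) * P = 0 := by
      rw [Matrix.sub_mul, Matrix.one_mul, hPidem, sub_self]
    have h1Pt : (1 - Pt) * Pt = 0 := by
      rw [Matrix.sub_mul, Matrix.one_mul, hPtidem, sub_self]
    have h1PPi : (1 - P) * Pi = 0 := by
      rw [Matrix.sub_mul, Matrix.one_mul, e3, sub_self]
    have h1PtPit : (1 - Pt) * Piᵀ = 0 := by
      rw [Matrix.sub_mul, Matrix.one_mul, e4, sub_self]
    have hGP : G * P = C * gt⁻¹ * Cᵀ := by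
      rw [hG, Matrix.add_mul, Matrix.mul_assoc ((1 - P)ᵀ * g), h1P, Matrix.mul_zero,
        Matrix.mul_assoc (C * gt⁻¹), hCtP, zero_add, Matrix.mul_assoc]
    have hGtPt : Gt * Pt = Cᵀ * g⁻¹ * C := by
      rw [hGt, Matrix.add_mul, Matrix.mul_assoc ((1 - Pt)ᵀ * gt), h1Pt, Matrix.mul_zero,
        Matrix.mul_assoc (Cᵀ * g⁻¹), hCPt, zero_add, Matrix.mul_assoc]
    have hGPi : G * Pi = -(C * gt⁻¹) := by
      rw [hG, Matrix.add_mul, Matrix.mul_assoc ((1 - P)ᵀ * g), h1PPi, Matrix.mul_zero, zero_add,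
        Matrix.mul_assoc (C * gt⁻¹), hCtPi, Matrix.mul_neg, Matrix.mul_assoc, hgtPt,
        ← Matrix.mul_assoc, hCPt]
    have hGtPit : Gt * Piᵀ = -(Cᵀ * g⁻¹) := by
      rw [hGt, Matrix.add_mul, Matrix.mul_assoc ((1 - Pt)ᵀ * gt), h1PtPit, Matrix.mul_zero,
        zero_add, Matrix.mul_assoc (Cᵀ * g⁻¹), hCPit, Matrix.mul_neg, Matrix.mul_assoc, hgP,
        ← Matrix.mul_assoc, hCtP]
    -- θ * M
    have hθM : θ * M = fromBlocks P (Pi * gt) (-(Piᵀ * g)) Pt := by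
      rw [hθ, hM, Matrix.fromBlocks_multiply]
      simp only [Matrix.zero_mul, Matrix.mul_zero, Matrix.mul_neg, Matrix.neg_mul, zero_add,
        add_zero, neg_zero, e1, e2, neg_neg]
    -- the key algebraic identity
    have key : N = M + N * (θ * M) := by
      rw [hθM, hN, hM, Matrix.fromBlocks_multiply, Matrix.fromBlocks_add,
        Matrix.fromBlocks_inj]
      refine ⟨?_, ?_, ?_, ?_⟩
      · rw [hGP, Matrix.neg_mul, Matrix.mul_neg, neg_neg, ← Matrix.mul_assoc C Piᵀ g, hCPit,
          Matrix.neg_mul, hPsa, hG, hprojg]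
        abel
      · rw [← Matrix.mul_assoc G Pi gt, hGPi, Matrix.neg_mul C Pt, hCPt, Matrix.neg_mul,
          Matrix.inv_mul_cancel_right_of_invertible]
        abel
      · rw [hCtP, Matrix.mul_neg, ← Matrix.mul_assoc Gt Piᵀ g, hGtPit, Matrix.neg_mul,
          Matrix.inv_mul_cancel_right_of_invertible, neg_neg]
        abel
      · rw [hGtPt, ← Matrix.mul_assoc Cᵀ Pi gt, hCtPi, Matrix.neg_mul, hPtsa, hGt, hprojgt]
        abel
    have hNinv : N * (M⁻¹ - θ) = 1 := by
      calc N * (M⁻¹ - θ) = N * M⁻¹ - N * θ := by rw [Matrix.mul_sub]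
        _ = (M + N * (θ * M)) * M⁻¹ - N * θ := by rw [← key]
        _ = M * M⁻¹ + N * (θ * M) * M⁻¹ - N * θ := by rw [Matrix.add_mul]
        _ = 1 + N * θ - N * θ := by
            rw [hM1, ← Matrix.mul_assoc N θ M, Matrix.mul_assoc (N * θ) M M⁻¹, hM1,
              Matrix.mul_one]
        _ = 1 := by abel
    have hfin : N⁻¹ = M⁻¹ - θ := Matrix.inv_eq_right_inv hNinv
    rw [hfin]
    abel
end

section
/- Let W be a finite-dimensional real vector space and consider W ⊕ W* with the canonical pairing ⟨v+α, w+β⟩ = β(v) + α(w). Suppose τ: W ⊕ W* → W ⊕ W* is an endomorphism with τ² = 1 such that (E₁,E₂) ↦ ⟨E₁, τE₂⟩ is positive definite. Then the +1-eigenbundle V₊ of τ has dimension dim W, intersects both W and W* trivially, and is the graph of a map 𝒢 + ℬ: W → W* where 𝒢 is a positive definite symmetric bilinear form and ℬ is antisymmetric. -/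
open Module

set_option maxHeartbeats 1000000 in
/-- **Generalized metric.**  Let `W` be a finite-dimensional real vector space and equip
`W ⊕ W*` with the canonical pairing `⟨v+α, w+β⟩ = β(v) + α(w)`.  If `τ` is an endomorphism
of `W ⊕ W*` with `τ² = 1` such that `E ↦ ⟨E, τE⟩` is positive definite, then the
`+1`-eigenspace `V₊` of `τ` has dimension `dim W`, intersects both `W` and `W*` trivially,
and is the graph of a map `𝒢 + ℬ : W → W*` with `𝒢` a positive definite symmetric bilinear
form and `ℬ` antisymmetric. -/
theorem generalized_metric_eigenspace_graph {W : Type*} [AddCommGroup W] [Module ℝ W]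
    [FiniteDimensional ℝ W]
    (τ : (W × Module.Dual ℝ W) →ₗ[ℝ] (W × Module.Dual ℝ W))
    (hτ : τ ∘ₗ τ = LinearMap.id)
    (hpos : ∀ E : W × Module.Dual ℝ W, E ≠ 0 → 0 < (τ E).2 E.1 + E.2 (τ E).1) :
    finrank ℝ (Module.End.eigenspace τ 1) = finrank ℝ W ∧
    Module.End.eigenspace τ 1 ⊓
      (⊤ : Submodule ℝ W).prod (⊥ : Submodule ℝ (Module.Dual ℝ W)) = ⊥ ∧
    Module.End.eigenspace τ 1 ⊓
      (⊥ : Submodule ℝ W).prod (⊤ : Submodule ℝ (Module.Dual ℝ W)) = ⊥ ∧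
    ∃ G B : W →ₗ[ℝ] Module.Dual ℝ W,
      (∀ v w : W, G v w = G w v) ∧
      (∀ v : W, v ≠ 0 → 0 < G v v) ∧
      (∀ v w : W, B v w = - B w v) ∧
      Module.End.eigenspace τ 1 = LinearMap.graph (G + B) := by
  classical
  set Vp := Module.End.eigenspace τ 1 with hVp
  set Vm := Module.End.eigenspace τ (-1) with hVm
  have hsq : ∀ E, τ (τ E) = E := by
    intro E
    have := DFunLike.congr_fun hτ E
    simpa using this
  have mem1 : ∀ E, E ∈ Vp ↔ τ E = E := by
    intro E; rw [hVp, Module.End.mem_eigenspace_iff, one_smul]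
  have memneg : ∀ E, E ∈ Vm ↔ τ E = -E := by
    intro E; rw [hVm, Module.End.mem_eigenspace_iff, neg_one_smul]
  -- positivity on Vp
  have pos1 : ∀ E ∈ Vp, E ≠ 0 → 0 < E.2 E.1 := by
    intro E hE hne
    have h := hpos E hne
    rw [(mem1 E).mp hE] at h
    linarith
  have neg1 : ∀ E ∈ Vm, E ≠ 0 → E.2 E.1 < 0 := by
    intro E hE hne
    have h := hpos E hne
    rw [(memneg E).mp hE] at h
    simp only [Prod.snd_neg, Prod.fst_neg, LinearMap.neg_apply, map_neg] at h
    linarith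
  -- injectivity of first projection on Vp and Vm
  have injp : ∀ E ∈ Vp, E.1 = 0 → E = 0 := by
    intro E hE h1
    by_contra hne
    have := pos1 E hE hne
    rw [h1] at this
    simp at this
  have injm : ∀ E ∈ Vm, E.1 = 0 → E = 0 := by
    intro E hE h1
    by_contra hne
    have := neg1 E hE hne
    rw [h1] at this
    simp at this
  -- intersection with W is trivial
  have hW : Vp ⊓ (⊤ : Submodule ℝ W).prod (⊥ : Submodule ℝ (Module.Dual ℝ W)) = ⊥ := by
    rw [Submodule.eq_bot_iff]
    intro E hE0
    rw [Submodule.mem_inf, Submodule.mem_prod] at hE0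
    obtain ⟨hE, hE'⟩ := hE0
    have h2 : E.2 = 0 := hE'.2
    by_contra hne
    have := pos1 E hE hne
    rw [h2] at this
    simp at this
  have hWs : Vp ⊓ (⊥ : Submodule ℝ W).prod (⊤ : Submodule ℝ (Module.Dual ℝ W)) = ⊥ := by
    rw [Submodule.eq_bot_iff]
    intro E hE0
    rw [Submodule.mem_inf, Submodule.mem_prod] at hE0
    exact injp E hE0.1 hE0.2.1
  -- Vp ⊔ Vm = ⊤, Vp ⊓ Vm = ⊥
  have hsup : Vp ⊔ Vm = ⊤ := by
    rw [eq_top_iff]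
    intro E _
    have hp : ((2:ℝ)⁻¹) • (E + τ E) ∈ Vp := by
      rw [mem1]
      simp [map_add, hsq E, add_comm]
    have hm : ((2:ℝ)⁻¹) • (E - τ E) ∈ Vm := by
      rw [memneg]
      rw [map_smul, map_sub, hsq E]
      module
    have : E = ((2:ℝ)⁻¹) • (E + τ E) + ((2:ℝ)⁻¹) • (E - τ E) := by
      rw [← smul_add]
      rw [show E + τ E + (E - τ E) = (2:ℝ) • E by rw [two_smul]; abel]
      rw [smul_smul]
      norm_num
    rw [this]
    exact Submodule.add_mem_sup hp hm
  have hinf : Vp ⊓ Vm = ⊥ := by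
    rw [Submodule.eq_bot_iff]
    intro E hE0
    rw [Submodule.mem_inf] at hE0
    have h1 := (mem1 E).mp hE0.1
    have h2 := (memneg E).mp hE0.2
    rw [h1] at h2
    have h3 : (2:ℝ) • E = E + -E := by
      rw [two_smul]
      exact congrArg (E + ·) h2
    rw [add_neg_cancel] at h3
    have := smul_eq_zero.mp h3
    simpa using this
  -- dimensions
  have hfr : finrank ℝ (W × Module.Dual ℝ W) = finrank ℝ W + finrank ℝ W := by
    rw [Module.finrank_prod, Subspace.dual_finrank_eq]
  -- fst restricted maps
  set fp : Vp →ₗ[ℝ] W := (LinearMap.fst ℝ W (Module.Dual ℝ W)) ∘ₗ Vp.subtype with hfp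
  set fm : Vm →ₗ[ℝ] W := (LinearMap.fst ℝ W (Module.Dual ℝ W)) ∘ₗ Vm.subtype with hfm
  have hfpinj : Function.Injective fp := by
    intro x y h
    have hm : (x : W × Module.Dual ℝ W) - (y : W × Module.Dual ℝ W) ∈ Vp :=
      Vp.sub_mem x.2 y.2
    have h1 : ((x : W × Module.Dual ℝ W) - (y : W × Module.Dual ℝ W)).1 = 0 :=
      sub_eq_zero_of_eq h
    exact Subtype.ext (sub_eq_zero.mp (injp _ hm h1))
  have hfminj : Function.Injective fm := by
    intro x y h
    have hm : (x : W × Module.Dual ℝ W) - (y : W × Module.Dual ℝ W) ∈ Vm :=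
      Vm.sub_mem x.2 y.2
    have h1 : ((x : W × Module.Dual ℝ W) - (y : W × Module.Dual ℝ W)).1 = 0 :=
      sub_eq_zero_of_eq h
    exact Subtype.ext (sub_eq_zero.mp (injm _ hm h1))
  have hlep : finrank ℝ Vp ≤ finrank ℝ W := LinearMap.finrank_le_finrank_of_injective hfpinj
  have hlem : finrank ℝ Vm ≤ finrank ℝ W := LinearMap.finrank_le_finrank_of_injective hfminj
  have hsum : finrank ℝ Vp + finrank ℝ Vm = finrank ℝ W + finrank ℝ W := by
    have h := Submodule.finrank_sup_add_finrank_inf_eq Vp Vm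
    rw [hsup, hinf] at h
    rw [finrank_top, finrank_bot, add_zero, hfr] at h
    exact h.symm
  have hdimp : finrank ℝ Vp = finrank ℝ W := by omega
  -- the equivalence
  set e : Vp ≃ₗ[ℝ] W := LinearMap.linearEquivOfInjective (K := ℝ) (V := Vp) (V₂ := W) fp hfpinj hdimp with he
  have he_apply : ∀ x : Vp, e x = (x : W × Module.Dual ℝ W).1 := fun x => rfl
  set A : W →ₗ[ℝ] Module.Dual ℝ W :=
    ((LinearMap.snd ℝ W (Module.Dual ℝ W)) ∘ₗ Vp.subtype) ∘ₗ (e.symm : W →ₗ[ℝ] Vp) with hA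
  have hA_apply : ∀ v : W, A v = ((e.symm v : Vp) : W × Module.Dual ℝ W).2 := fun v => rfl
  have hgraph : ∀ E : W × Module.Dual ℝ W, E ∈ Vp ↔ E.2 = A E.1 := by
    intro E
    constructor
    · intro hE
      have h1 : e ⟨E, hE⟩ = E.1 := he_apply ⟨E, hE⟩
      have h2 : e.symm E.1 = ⟨E, hE⟩ := by
        rw [LinearEquiv.symm_apply_eq, h1]
      rw [hA_apply, h2]
    · intro h
      have h1 : ((e.symm E.1 : Vp) : W × Module.Dual ℝ W).1 = E.1 := by
        have := he_apply (e.symm E.1)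
        rw [LinearEquiv.apply_symm_apply] at this
        exact this.symm
      have h2 : ((e.symm E.1 : Vp) : W × Module.Dual ℝ W) = E := by
        apply Prod.ext h1
        rw [h, hA_apply]
      rw [← h2]
      exact (e.symm E.1).2
  -- positivity of A on the diagonal
  have hApos : ∀ v : W, v ≠ 0 → 0 < A v v := by
    intro v hv
    have hmem : (v, A v) ∈ Vp := (hgraph (v, A v)).mpr rfl
    have hne : (v, A v) ≠ 0 := by
      intro h
      exact hv (congrArg Prod.fst h)
    exact pos1 _ hmem hne
  clear_value A e fp fm
  have hGapp : ∀ v w : W, ((2:ℝ)⁻¹ • (A + A.flip)) v w = 2⁻¹ * (A v w + A w v) := by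
    intro v w
    rw [LinearMap.smul_apply, LinearMap.smul_apply, LinearMap.add_apply,
      LinearMap.add_apply, LinearMap.flip_apply, smul_eq_mul]
  have hBapp : ∀ v w : W, ((2:ℝ)⁻¹ • (A - A.flip)) v w = 2⁻¹ * (A v w - A w v) := by
    intro v w
    rw [LinearMap.smul_apply, LinearMap.smul_apply, LinearMap.sub_apply,
      LinearMap.sub_apply, LinearMap.flip_apply, smul_eq_mul]
  refine ⟨hdimp, hW, hWs, ?_⟩
  refine ⟨((2:ℝ)⁻¹) • (A + A.flip), ((2:ℝ)⁻¹) • (A - A.flip), ?_, ?_, ?_, ?_⟩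
  · intro v w
    rw [hGapp, hGapp]
    ring
  · intro v hv
    have := hApos v hv
    rw [hGapp]
    linarith
  · intro v w
    rw [hBapp, hBapp]
    ring
  · have hGB : ((2:ℝ)⁻¹) • (A + A.flip) + ((2:ℝ)⁻¹) • (A - A.flip) = A := by
      ext v w
      rw [LinearMap.add_apply, LinearMap.add_apply, hGapp, hBapp]
      ring
    rw [hGB]
    ext E
    rw [LinearMap.mem_graph_iff]
    exact hgraph E
end
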